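/- arXiv:2310.00308 — 13 statements merged into one kernel-verified Lean document; each statement's English description precedes it below -/
import Mathlib

section
/- If the additive group of a ring $K$ is finitely generated, then $K$ is finitely separable: for every element $a \in K$ and every subring $A \subseteq K$ with $a \notin A$, there exists a finite ring $F$ and a ring homomorphism $\varphi : K \to F$ such that $\varphi(a) \notin \varphi(A)$. -/
/-- A (not necessarily unital) ring `K` is finitely separable if every element `a`
lying outside a subring `A` can be separated from `A` by a homomorphism to a finite ring. -/
def IsFinSep (K : Type) [NonUnitalRing K] : Prop :=
  ∀ (a : K) (A : NonUnitalSubring K), a ∉ A →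
    ∃ (F : Type) (_ : NonUnitalRing F) (_ : Finite F),
      ∃ φ : K →ₙ+* F, φ a ∉ ⇑φ '' (A : Set K)

/-- `ppow a n = a ^ (n + 1)`, the positive powers of `a` in a non-unital ring. -/
def ppow {K : Type} [NonUnitalRing K] (a : K) : ℕ → K
  | 0 => a
  | n + 1 => ppow a n * a

/-- Evaluation of an integer polynomial (whose constant term is ignored, hence
meaningful for polynomials with zero constant term) at an element of a non-unital ring. -/
def evalnc {K : Type} [NonUnitalRing K] (p : Polynomial ℤ) (a : K) : K :=
  ∑ i ∈ Finset.range p.natDegree, p.coeff (i + 1) • ppow a i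

/-!
Let `a ∉ A`. The quotient `K ⧸ A` is a finitely generated abelian group in which the class of
`a` is nonzero, so by the structure theorem it is not divisible by some `n > 0`. The ideal `nK`
has finite index, since `K ⧸ nK` is finitely generated and killed by `n`, and `a ∈ A + nK`
would make the class of `a` divisible by `n`. Hence `K → K ⧸ nK` separates `a` from `A`.
-/

lemma Finsupp.exists_nsmul_ne {ι : Type*} {u : ι →₀ ℤ} (hu : u ≠ 0) :
    ∃ n : ℕ, 0 < n ∧ ∀ x : ι →₀ ℤ, n • x ≠ u := by
  obtain ⟨i, hi⟩ : ∃ i, u i ≠ 0 := by simpa [Finsupp.ext_iff] using hu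
  refine ⟨(u i).natAbs + 1, Nat.succ_pos _, fun x hx => hi ?_⟩
  refine Int.eq_zero_of_abs_lt_dvd (m := ((u i).natAbs + 1 : ℕ)) ⟨x i, ?_⟩
    (by rw [Int.abs_eq_natAbs]; omega)
  simpa [nsmul_eq_mul] using (DFunLike.congr_fun hx i).symm

lemma Prod.exists_nsmul_ne_of_finite {F T : Type*} [AddCommGroup F] [AddCommGroup T] [Finite T]
    (hF : ∀ u : F, u ≠ 0 → ∃ n : ℕ, 0 < n ∧ ∀ x : F, n • x ≠ u) {q : F × T}
    (hq : q ≠ 0) :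
    ∃ n : ℕ, 0 < n ∧ ∀ x : F × T, n • x ≠ q := by
  by_cases hq₁ : q.1 = 0
  · refine ⟨Nat.card T, Nat.card_pos, fun x hx => hq (Prod.ext hq₁ ?_)⟩
    simp [← hx]
  · obtain ⟨n, hn, hn'⟩ := hF q.1 hq₁
    exact ⟨n, hn, fun x hx => hn' x.1 (by simp [← hx])⟩

lemma AddCommGroup.exists_nsmul_ne {Q : Type*} [AddCommGroup Q] [AddGroup.FG Q] {q : Q}
    (hq : q ≠ 0) : ∃ n : ℕ, 0 < n ∧ ∀ x : Q, n • x ≠ q := by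
  obtain ⟨r, ι, _, p, hp, e, ⟨f⟩⟩ := AddCommGroup.equiv_free_prod_directSum_zmod Q
  have : ∀ i, NeZero (p i ^ e i) := fun i => ⟨pow_ne_zero _ (hp i).ne_zero⟩
  have : Finite (DirectSum ι fun i => ZMod (p i ^ e i)) :=
    Finite.of_injective _ DFunLike.coe_injective
  obtain ⟨n, hn, hn'⟩ := Prod.exists_nsmul_ne_of_finite (fun _ => Finsupp.exists_nsmul_ne)
    ((map_ne_zero_iff f f.injective).2 hq)
  exact ⟨n, hn, fun x hx => hn' (f x) (by rw [← map_nsmul, hx])⟩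

namespace TwoSidedIdeal

variable {R : Type*} [NonUnitalRing R]

variable (R) in
def nsmulRange (n : ℕ) : TwoSidedIdeal R :=
  .mk' (Set.range (n • ·)) ⟨0, smul_zero n⟩
    (by rintro _ _ ⟨z, rfl⟩ ⟨w, rfl⟩; exact ⟨z + w, smul_add n z w⟩)
    (by rintro _ ⟨z, rfl⟩; exact ⟨-z, smul_neg n z⟩)
    (by rintro x _ ⟨z, rfl⟩; exact ⟨x * z, (mul_smul_comm n x z).symm⟩)
    (by rintro _ y ⟨z, rfl⟩; exact ⟨z * y, (smul_mul_assoc n z y).symm⟩)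

lemma mem_nsmulRange {n : ℕ} {x : R} : x ∈ nsmulRange R n ↔ ∃ z, n • z = x :=
  mem_mk' ..

lemma nsmul_mem_nsmulRange (n : ℕ) (x : R) : n • x ∈ nsmulRange R n :=
  mem_nsmulRange.2 ⟨x, rfl⟩

def nonUnitalMk (I : TwoSidedIdeal R) : R →ₙ+* I.ringCon.Quotient where
  toFun x := x
  map_add' _ _ := rfl
  map_mul' _ _ := rfl
  map_zero' := rfl

lemma nonUnitalMk_surjective (I : TwoSidedIdeal R) : Function.Surjective I.nonUnitalMk :=
  Quotient.mk''_surjective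

lemma nonUnitalMk_eq_iff {I : TwoSidedIdeal R} {x y : R} :
    I.nonUnitalMk x = I.nonUnitalMk y ↔ x - y ∈ I :=
  RingCon.eq I.ringCon |>.trans (I.rel_iff x y)

lemma finite_quotient_of_nsmul_mem [AddGroup.FG R] {I : TwoSidedIdeal R} {n : ℕ} (hn : 0 < n)
    (hI : ∀ x : R, n • x ∈ I) : Finite I.ringCon.Quotient := by
  have : AddGroup.FG I.ringCon.Quotient :=
    AddGroup.fg_of_surjective (f := I.nonUnitalMk.toAddMonoidHom) I.nonUnitalMk_surjective
  refine AddCommGroup.finite_of_fg_isAddTorsion _ fun y => ?_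
  obtain ⟨x, rfl⟩ := I.nonUnitalMk_surjective y
  refine isOfFinAddOrder_iff_nsmul_eq_zero.2 ⟨n, hn, ?_⟩
  rw [← map_nsmul, ← map_zero I.nonUnitalMk, nonUnitalMk_eq_iff, sub_zero]
  exact hI x

end TwoSidedIdeal

/-- If the additive group of a ring is finitely generated, the ring is finitely separable. -/
theorem stmt0 (K : Type) [NonUnitalRing K] (h : AddGroup.FG K) : IsFinSep K := by
  intro a A ha
  let N := A.toAddSubgroup
  have : AddGroup.FG (K ⧸ N) :=
    AddGroup.fg_of_surjective (QuotientAddGroup.mk'_surjective N)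
  obtain ⟨n, hn, hsep⟩ := AddCommGroup.exists_nsmul_ne
    (mt (QuotientAddGroup.eq_zero_iff a).1 ha : (a : K ⧸ N) ≠ 0)
  let I := TwoSidedIdeal.nsmulRange K n
  refine ⟨_, inferInstance,
    I.finite_quotient_of_nsmul_mem hn (TwoSidedIdeal.nsmul_mem_nsmulRange n), I.nonUnitalMk, ?_⟩
  rintro ⟨b, hb, hba⟩
  obtain ⟨z, hz⟩ := TwoSidedIdeal.mem_nsmulRange.1 (TwoSidedIdeal.nonUnitalMk_eq_iff.1 hba)
  refine hsep (-z : K) ?_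
  rw [← QuotientAddGroup.mk_nsmul, smul_neg, hz, neg_sub, QuotientAddGroup.mk_sub,
    (QuotientAddGroup.eq_zero_iff b).2 hb, sub_zero]
end

section
/- Every quotient of a finitely separable ring is finitely separable: if $K$ is finitely separable and $I$ is a two-sided ideal of $K$, then $K/I$ is finitely separable. -/
namespace RingCon

variable {R : Type*} [NonUnitalRing R]

def mkₙ (c : RingCon R) : R →ₙ+* c.Quotient where
  toFun x := x
  map_mul' _ _ := rfl
  map_add' _ _ := rfl
  map_zero' := rfl

theorem mkₙ_surjective (c : RingCon R) : Function.Surjective c.mkₙ :=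
  Quotient.mk''_surjective

theorem mkₙ_eq_zero_iff (c : RingCon R) {x : R} : c.mkₙ x = 0 ↔ c x 0 :=
  c.eq

def mapₙ {c d : RingCon R} (h : c ≤ d) : c.Quotient →ₙ+* d.Quotient where
  toFun := Quotient.map' id h
  map_mul' x y := Quotient.inductionOn₂ x y fun _ _ => rfl
  map_add' x y := Quotient.inductionOn₂ x y fun _ _ => rfl
  map_zero' := rfl

@[simp]
theorem mapₙ_mkₙ {c d : RingCon R} (h : c ≤ d) (x : R) : mapₙ h (c.mkₙ x) = d.mkₙ x :=
  rfl

theorem mapₙ_surjective {c d : RingCon R} (h : c ≤ d) : Function.Surjective (mapₙ h) :=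
  Function.Surjective.of_comp (g := c.mkₙ) d.mkₙ_surjective

end RingCon

namespace TwoSidedIdeal

variable {K F : Type*} [NonUnitalRing K] [NonUnitalRing F]

theorem finite_quotient_of_ker_le [Finite F] (φ : K →ₙ+* F) {J : TwoSidedIdeal K}
    (h : ker φ ≤ J) : Finite J.ringCon.Quotient :=
  have : Finite (ker φ).ringCon.Quotient :=
    .of_injective (Quotient.lift φ fun _ _ => id) fun x y =>
      Quotient.inductionOn₂ x y fun _ _ h => Quotient.sound h
  .of_surjective _ (RingCon.mapₙ_surjective (ringCon_le_iff.mp h))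

theorem mkₙ_notMem_image_ker_sup (φ : K →ₙ+* F) {I : TwoSidedIdeal K}
    {A : NonUnitalSubring K} (hIA : (I : Set K) ⊆ A) {a : K} (ha : φ a ∉ φ '' A) :
    (ker φ ⊔ I).ringCon.mkₙ a ∉ (ker φ ⊔ I).ringCon.mkₙ '' A := by
  rintro ⟨x, hxA, hxa⟩
  obtain ⟨u, hu, v, hv, huv⟩ := mem_sup.mp ((rel_iff _ _ _).mp (RingCon.eq _ |>.mp hxa))
  refine ha ⟨x - v, A.sub_mem hxA (hIA hv), ?_⟩
  have hau : a = x - v - u := by rw [sub_sub, add_comm, huv, sub_sub_cancel]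
  rw [hau, map_sub φ _ u, (mem_ker φ).mp hu, sub_zero]

end TwoSidedIdeal

/-- Every quotient of a finitely separable ring is finitely separable. -/
theorem stmt1 (K : Type) [NonUnitalRing K] (hK : IsFinSep K) (I : TwoSidedIdeal K) :
    IsFinSep I.ringCon.Quotient := by
  intro a A haA
  obtain ⟨a, rfl⟩ := I.ringCon.mkₙ_surjective a
  let A' := A.comap I.ringCon.mkₙ
  have hIA' : (I : Set K) ⊆ A' := fun x hx => by
    change I.ringCon.mkₙ x ∈ A
    rw [I.ringCon.mkₙ_eq_zero_iff.mpr hx]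
    exact A.zero_mem
  obtain ⟨F, _, _, φ, hφ⟩ := hK a A' haA
  refine ⟨(TwoSidedIdeal.ker φ ⊔ I).ringCon.Quotient, inferInstance,
    TwoSidedIdeal.finite_quotient_of_ker_le φ le_sup_left,
    RingCon.mapₙ (TwoSidedIdeal.ringCon_le_iff.mp le_sup_right), ?_⟩
  rintro ⟨b, hbA, hba⟩
  obtain ⟨x, rfl⟩ := I.ringCon.mkₙ_surjective b
  simp only [RingCon.mapₙ_mkₙ] at hba
  exact TwoSidedIdeal.mkₙ_notMem_image_ker_sup φ hIA' hφ ⟨x, hbA, hba⟩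
end

section
/- In a finitely separable ring, any finite subset disjoint from a subring can be separated from it by a single homomorphism to a finite ring: if $K$ is finitely separable, $S \subseteq K$ is finite, $A \subseteq K$ is a subring, and $S \cap A = \emptyset$, then there is a finite ring $F$ and a homomorphism $\varphi : K \to F$ with $\varphi(S) \cap \varphi(A) = \emptyset$. -/
/-- A finite subset disjoint from a subring can be separated from it by a single
homomorphism to a finite ring. -/
theorem stmt3 (K : Type) [NonUnitalRing K] (hK : IsFinSep K) (S : Finset K)
    (A : NonUnitalSubring K) (hSA : (S : Set K) ∩ (A : Set K) = ∅) :
    ∃ (F : Type) (_ : NonUnitalRing F) (_ : Finite F),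
      ∃ φ : K →ₙ+* F, ⇑φ '' (S : Set K) ∩ ⇑φ '' (A : Set K) = ∅ := by
  classical
  have h : ∀ a : S, (a : K) ∉ A := by
    rintro ⟨a, ha⟩ hA
    exact Set.eq_empty_iff_forall_notMem.mp hSA a ⟨ha, hA⟩
  choose F inst fin φ hφ using fun a : S => hK a A (h a)
  letI : ∀ a, NonUnitalRing (F a) := inst
  letI : ∀ a, Finite (F a) := fin
  refine ⟨∀ a : S, F a, inferInstance, inferInstance, Pi.nonUnitalRingHom φ, ?_⟩
  rw [Set.eq_empty_iff_forall_notMem]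
  rintro x ⟨⟨s, hs, rfl⟩, ⟨b, hb, heq⟩⟩
  exact hφ ⟨s, hs⟩ ⟨b, hb, congrFun heq ⟨s, hs⟩⟩
end

section
/- The direct product of finitely many finitely separable rings is finitely separable. -/
/-!
By induction on the index type it suffices to treat `K₁ × K₂`. Let `a ∉ A`. If `a.1` is not
the first coordinate of an element of `A`, separate it inside `K₁`. Otherwise pick `b ∈ A` with
`b.1 = a.1` and put `c = a.2 - b.2`, so that `(0, c) ∉ A`. Separating in `K₁` yields a finite
quotient `φ₁` of `K₁` with `(n, c) ∉ A` whenever `φ₁ n = 0`; then `c` lies outside the subring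
`{y | ∃ n, φ₁ n = 0 ∧ (n, y) ∈ A}` of `K₂`, and a finite quotient `φ₂` separating it there makes
`φ₁ × φ₂` separate `a` from `A`.
-/

open NonUnitalRingHom (fst snd)

variable {K L : Type} [NonUnitalRing K] [NonUnitalRing L]

def SeparatedByFiniteRing (a : K) (A : Set K) : Prop :=
  ∃ (F : Type) (_ : NonUnitalRing F) (_ : Finite F), ∃ φ : K →ₙ+* F, φ a ∉ φ '' A

theorem SeparatedByFiniteRing.of_map (f : K →ₙ+* L) {a : K} {A : NonUnitalSubring K}
    (h : SeparatedByFiniteRing (f a) (A.map f)) : SeparatedByFiniteRing a A := by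
  obtain ⟨F, _, _, φ, hφ⟩ := h
  refine ⟨F, inferInstance, inferInstance, φ.comp f, ?_⟩
  rwa [NonUnitalRingHom.coe_comp, Set.image_comp, ← NonUnitalSubring.coe_map]

namespace IsFinSep

theorem of_subsingleton [Subsingleton K] : IsFinSep K :=
  fun a A ha => (ha (Subsingleton.elim 0 a ▸ A.zero_mem)).elim

theorem of_injective (f : K →ₙ+* L) (hf : Function.Injective f) (h : IsFinSep L) :
    IsFinSep K := fun a A ha =>
  SeparatedByFiniteRing.of_map f <| h (f a) (A.map f) (by simpa [hf.eq_iff] using ha)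

section Prod

variable {K₁ K₂ : Type} [NonUnitalRing K₁] [NonUnitalRing K₂]

theorem separatedByFiniteRing_of_fst_notMem (h₁ : IsFinSep K₁) {a : K₁ × K₂}
    {A : NonUnitalSubring (K₁ × K₂)} (ha : a.1 ∉ A.map (fst K₁ K₂)) :
    SeparatedByFiniteRing a A :=
  .of_map (fst K₁ K₂) (h₁ a.1 _ ha)

theorem exists_finite_hom_forall_eq_zero_notMem (h₁ : IsFinSep K₁)
    {A : NonUnitalSubring (K₁ × K₂)} {c : K₂} (hc : ((0 : K₁), c) ∉ A) :
    ∃ (F : Type) (_ : NonUnitalRing F) (_ : Finite F) (φ : K₁ →ₙ+* F),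
      ∀ n, φ n = 0 → (n, c) ∉ A := by
  by_cases hw : ∃ w, (w, c) ∈ A
  swap
  · exact ⟨PUnit, inferInstance, inferInstance, 0, fun n _ hn => hw ⟨n, hn⟩⟩
  obtain ⟨w, hwA⟩ := hw
  -- `A₀ = {x | (x, 0) ∈ A}`; if `w ∈ A₀` then `(0, c) = (w, c) - (w, 0) ∈ A`.
  have hwA₀ : w ∉ A.comap ((NonUnitalRingHom.id K₁).prod 0) := by
    intro hw₀
    apply hc
    simpa using A.sub_mem hwA hw₀
  obtain ⟨F, _, _, φ, hφ⟩ := h₁ w _ hwA₀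
  refine ⟨F, inferInstance, inferInstance, φ, fun n hn hnA => hφ ⟨w - n, ?_, ?_⟩⟩
  · simpa using A.sub_mem hwA hnA
  · simp [hn]

theorem separatedByFiniteRing_of_forall_eq_zero_notMem (h₂ : IsFinSep K₂)
    {A : NonUnitalSubring (K₁ × K₂)} {a b : K₁ × K₂} (hb : b ∈ A) (hba : b.1 = a.1)
    {F₁ : Type} [NonUnitalRing F₁] [Finite F₁] (φ₁ : K₁ →ₙ+* F₁)
    (hφ₁ : ∀ n, φ₁ n = 0 → (n, a.2 - b.2) ∉ A) : SeparatedByFiniteRing a A := by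
  set E := (A ⊓ (⊥ : NonUnitalSubring F₁).comap (φ₁.comp (fst K₁ K₂))).map (snd K₁ K₂)
  have hE : a.2 - b.2 ∉ E := by
    rintro ⟨x, ⟨hxA, hx₁⟩, hx₂⟩
    refine hφ₁ x.1 (by simpa [NonUnitalSubring.mem_bot] using hx₁) ?_
    rw [← hx₂]
    exact hxA
  obtain ⟨F₂, _, _, φ₂, hφ₂⟩ := h₂ _ E hE
  refine ⟨F₁ × F₂, inferInstance, inferInstance,
    (φ₁.comp (fst K₁ K₂)).prod (φ₂.comp (snd K₁ K₂)), ?_⟩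
  rintro ⟨x, hxA, hx⟩
  obtain ⟨hx₁, hx₂⟩ := Prod.ext_iff.mp hx
  refine hφ₂ ⟨x.2 - b.2, ⟨x - b, ⟨A.sub_mem hxA hb, ?_⟩, rfl⟩, ?_⟩
  · simpa [NonUnitalSubring.mem_bot, hba, sub_eq_zero] using hx₁
  · simpa using hx₂

theorem prod (h₁ : IsFinSep K₁) (h₂ : IsFinSep K₂) : IsFinSep (K₁ × K₂) := by
  intro a A ha
  by_cases hm : a.1 ∈ A.map (fst K₁ K₂)
  swap
  · exact separatedByFiniteRing_of_fst_notMem h₁ hm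
  obtain ⟨b, hb, hba⟩ := NonUnitalSubring.mem_map.mp hm
  have hc : ((0 : K₁), a.2 - b.2) ∉ A := by
    intro hc
    have hab : b + (0, a.2 - b.2) = a := Prod.ext (by simpa using hba) (by simp)
    exact ha (hab ▸ A.add_mem hb hc)
  obtain ⟨F₁, _, _, φ₁, hφ₁⟩ := exists_finite_hom_forall_eq_zero_notMem h₁ hc
  exact separatedByFiniteRing_of_forall_eq_zero_notMem h₂ hb hba φ₁ hφ₁

end Prod

end IsFinSep

/-- Mal'cev: the direct product of finitely many finitely separable rings is
finitely separable. -/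
theorem stmt4 (ι : Type) [Finite ι] (K : ι → Type) [∀ i, NonUnitalRing (K i)]
    (h : ∀ i, IsFinSep (K i)) : IsFinSep (∀ i, K i) := by
  induction ι using Finite.induction_empty_option with
  | of_equiv e ih =>
    exact .of_injective (RingEquiv.piCongrLeft K e).symm.toNonUnitalRingHom
      (RingEquiv.injective _) (ih _ fun i => h (e i))
  | h_empty => exact .of_subsingleton
  | h_option ih =>
    exact .of_injective RingEquiv.piOptionEquivProd.toNonUnitalRingHom (RingEquiv.injective _)
      ((h none).prod (ih _ fun i => h (some i)))
end

section
/- Every element of a finitely separable ring is algebraic: if $K$ is a finitely separable ring and $a \in K$, then there exists a nonzero polynomial $f(x)$ with integer coefficients and zero constant term such that $f(a) = 0$ in $K$. -/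
/-!
If `a` is not algebraic, then `q ↦ q(a)` is injective on integer polynomials without constant
term, so the values `q(a)` of those `q` with `q(1/2) ∈ ℤ` form a subring `A` that does not contain
`a = X(a)`. On the other hand, in a finite ring the image `b` of `a` satisfies `b^n = b^(n+e)` for
some `n, e ≥ 1`; then `q = X + 2^(n+e-1) (X^(n+e) - X^n)` has `q(b) = b` and `q(1/2) = 1 - 2^(e-1)`,
so `b` lies in the image of `A`, and no finite quotient separates `a` from `A`.
-/

open Polynomial

section Evalnc

variable {K : Type} [NonUnitalRing K]

lemma inr_ppow (a : K) (n : ℕ) :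
    ((ppow a n : K) : Unitization ℤ K) = (a : Unitization ℤ K) ^ (n + 1) := by
  induction n with
  | zero => simp [ppow]
  | succ n ih => rw [ppow, pow_succ, ← ih, Unitization.inr_mul]

lemma evalnc_eq_snd_aeval (q : ℤ[X]) (a : K) :
    evalnc q a = (aeval (a : Unitization ℤ K) q).snd := by
  rw [aeval_eq_sum_range, ← Unitization.sndHom_apply ℤ, map_sum, Finset.sum_range_succ']
  simp only [Unitization.sndHom_apply, Unitization.snd_smul, pow_zero, Unitization.snd_one,
    smul_zero, add_zero, ← inr_ppow, Unitization.snd_inr, evalnc]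

lemma fst_aeval_inr (q : ℤ[X]) (a : K) : (aeval (a : Unitization ℤ K) q).fst = q.coeff 0 := by
  rw [← Unitization.fstHom_apply, ← aeval_algHom_apply, Unitization.fstHom_apply,
    Unitization.fst_inr, ← coeff_zero_eq_aeval_zero]

lemma evalnc_add (p q : ℤ[X]) (a : K) : evalnc (p + q) a = evalnc p a + evalnc q a := by
  simp only [evalnc_eq_snd_aeval, map_add, Unitization.snd_add]

lemma evalnc_neg (p : ℤ[X]) (a : K) : evalnc (-p) a = -evalnc p a := by
  simp only [evalnc_eq_snd_aeval, map_neg, Unitization.snd_neg]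

lemma evalnc_sub (p q : ℤ[X]) (a : K) : evalnc (p - q) a = evalnc p a - evalnc q a := by
  rw [sub_eq_add_neg, evalnc_add, evalnc_neg, sub_eq_add_neg]

lemma evalnc_mul {p q : ℤ[X]} (hp : p.coeff 0 = 0) (hq : q.coeff 0 = 0) (a : K) :
    evalnc (p * q) a = evalnc p a * evalnc q a := by
  simp [evalnc_eq_snd_aeval, Unitization.snd_mul, fst_aeval_inr, hp, hq]

lemma evalnc_X (a : K) : evalnc X a = a := by
  simp [evalnc, ppow]

lemma evalnc_C_mul_X_pow (m : ℤ) (n : ℕ) (a : K) :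
    evalnc (C m * X ^ (n + 1)) a = m • ppow a n := by
  rw [evalnc_eq_snd_aeval, map_mul, aeval_C, aeval_X_pow, ← Algebra.smul_def,
    Unitization.snd_smul, ← inr_ppow, Unitization.snd_inr]

lemma map_ppow {F : Type} [NonUnitalRing F] (φ : K →ₙ+* F) (a : K) (n : ℕ) :
    φ (ppow a n) = ppow (φ a) n := by
  induction n with
  | zero => rfl
  | succ n ih => rw [ppow, map_mul, ih, ppow]

lemma map_evalnc {F : Type} [NonUnitalRing F] (φ : K →ₙ+* F) (q : ℤ[X]) (a : K) :
    φ (evalnc q a) = evalnc q (φ a) := by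
  simp [evalnc, map_ppow]

end Evalnc

def integralAtHalf : NonUnitalSubring ℤ[X] where
  carrier := {q | q.coeff 0 = 0 ∧ ∃ z : ℤ, aeval (2⁻¹ : ℚ) q = z}
  zero_mem' := ⟨coeff_zero 0, 0, by simp⟩
  add_mem' := fun ⟨hp, z, hz⟩ ⟨hq, w, hw⟩ => ⟨by simp [hp, hq], z + w, by simp [hz, hw]⟩
  neg_mem' := fun ⟨hp, z, hz⟩ => ⟨by simp [hp], -z, by simp [hz]⟩
  mul_mem' := fun ⟨hp, z, hz⟩ ⟨hq, w, hw⟩ =>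
    ⟨by simp [mul_coeff_zero, hp, hq], z * w, by simp [hz, hw]⟩

section Separation

variable {K : Type} [NonUnitalRing K]

def evalncHom (a : K) : integralAtHalf →ₙ+* K where
  toFun q := evalnc q a
  map_mul' p q := evalnc_mul p.2.1 q.2.1 a
  map_zero' := by simp [evalnc]
  map_add' p q := evalnc_add p q a

lemma exists_evalnc_eq_zero_of_mem_range {a : K} (h : a ∈ (evalncHom a).range) :
    ∃ p : ℤ[X], p ≠ 0 ∧ p.coeff 0 = 0 ∧ evalnc p a = 0 := by
  obtain ⟨⟨q, hq0, z, hz⟩, hqa⟩ := h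
  have hqX : q ≠ X := by
    rintro rfl
    have : (2 * z : ℤ) = 1 := by
      exact_mod_cast (by rw [Int.cast_mul, ← hz]; simp : ((2 * z : ℤ) : ℚ) = 1)
    omega
  refine ⟨X - q, sub_ne_zero.mpr hqX.symm, by simp [hq0], ?_⟩
  rw [evalnc_sub, evalnc_X]
  exact sub_eq_zero.mpr hqa.symm

lemma self_mem_range_evalncHom_of_ppow_eq {b : K} {i d : ℕ}
    (h : ppow b (i + d + 1) = ppow b i) : b ∈ (evalncHom b).range := by
  set m : ℤ := 2 ^ (i + d + 1)
  set q : ℤ[X] := X + (C m * X ^ (i + d + 1 + 1) - C m * X ^ (i + 1))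
  have hq0 : q.coeff 0 = 0 := by simp [q, coeff_X, coeff_X_pow]
  have hq : aeval (2⁻¹ : ℚ) q = (1 - 2 ^ d : ℤ) := by
    simp only [q, m, map_add, map_sub, map_mul, aeval_C, aeval_X, aeval_X_pow, algebraMap_int_eq,
      Int.coe_castRingHom, inv_pow]
    push_cast
    field_simp
    ring
  refine ⟨⟨q, hq0, _, hq⟩, ?_⟩
  change evalnc q b = b
  rw [evalnc_add, evalnc_sub, evalnc_X, evalnc_C_mul_X_pow, evalnc_C_mul_X_pow, h, sub_self,
    add_zero]

lemma exists_ppow_add_eq_ppow {F : Type} [NonUnitalRing F] [Finite F] (b : F) :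
    ∃ i d : ℕ, ppow b (i + d + 1) = ppow b i := by
  obtain ⟨i, j, hij, he⟩ := Finite.exists_ne_map_eq_of_infinite (ppow b)
  rcases hij.lt_or_gt with hlt | hlt
  · exact ⟨i, j - i - 1, by rw [show i + (j - i - 1) + 1 = j by omega, he]⟩
  · exact ⟨j, i - j - 1, by rw [show j + (i - j - 1) + 1 = i by omega, he]⟩

lemma map_mem_image_range_evalncHom {F : Type} [NonUnitalRing F] [Finite F] (φ : K →ₙ+* F)
    (a : K) : φ a ∈ φ '' ((evalncHom a).range : Set K) := by
  obtain ⟨i, d, h⟩ := exists_ppow_add_eq_ppow (φ a)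
  obtain ⟨q, hq⟩ := self_mem_range_evalncHom_of_ppow_eq h
  exact ⟨evalnc q a, ⟨q, rfl⟩, (map_evalnc φ q a).trans hq⟩

end Separation

/-- Every element of a finitely separable ring is algebraic. -/
theorem stmt5 (K : Type) [NonUnitalRing K] (hK : IsFinSep K) (a : K) :
    ∃ p : Polynomial ℤ, p ≠ 0 ∧ p.coeff 0 = 0 ∧ evalnc p a = 0 := by
  by_contra hna
  obtain ⟨F, _, _, φ, hφ⟩ :=
    hK a (evalncHom a).range (fun ha => hna (exists_evalnc_eq_zero_of_mem_range ha))
  exact hφ (map_mem_image_range_evalncHom φ a)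
end

section
/- The polynomial ring $R[x,y]$ in two commuting variables over any field $R$ is not finitely separable. -/
theorem MulHom.exists_map_pow_two_mul_eq_map_pow {M F : Type*} [Monoid M] [Semigroup F]
    [Finite F] (φ : M →ₙ* F) (y : M) : ∃ i, 0 < i ∧ φ (y ^ (2 * i)) = φ (y ^ i) := by
  let : TopologicalSpace F := ⊥
  have : DiscreteTopology F := ⟨rfl⟩
  obtain ⟨_, ⟨i, rfl⟩, hidem⟩ := exists_idempotent_in_compact_subsemigroup
    (fun _ => continuous_of_discreteTopology) (Set.range fun n : ℕ => φ (y ^ (n + 1)))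
    (Set.range_nonempty _) (Set.toFinite _).isCompact
    (by rintro _ ⟨a, rfl⟩ _ ⟨b, rfl⟩; exact ⟨a + b + 1, by rw [← map_mul, ← pow_add]; ring_nf⟩)
  exact ⟨i + 1, i.succ_pos, by rw [two_mul, pow_add, map_mul, hidem]⟩

namespace MvPolynomial

section Weight

variable {R : Type*} [CommRing R]

noncomputable def yWeight (k : ℕ) : R := if k = 0 then -1 else (padicValNat 2 k : R)

theorem yWeight_two_mul {i : ℕ} (hi : i ≠ 0) : yWeight (2 * i) = (yWeight i + 1 : R) := by
  rw [yWeight, yWeight, if_neg (by omega), if_neg hi, padicValNat.mul two_ne_zero hi,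
    padicValNat_self]
  push_cast
  ring

variable (R) in
noncomputable def xyWeight : MvPolynomial (Fin 2) R →ₗ[R] R :=
  (basisMonomials (Fin 2) R).constr R fun m => if m 0 = 1 then yWeight (m 1) else 0

theorem xyWeight_X_mul_X_pow (k : ℕ) : xyWeight R (X 0 * X 1 ^ k) = yWeight k := by
  have hmon : (X 0 * X 1 ^ k : MvPolynomial (Fin 2) R) =
      basisMonomials (Fin 2) R (Finsupp.single 0 1 + Finsupp.single 1 k) := by
    rw [coe_basisMonomials, X_pow_eq_monomial, X, monomial_mul, one_mul]
  rw [hmon, xyWeight, Module.Basis.constr_basis]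
  simp

theorem xyWeight_X_zero : xyWeight R (X 0) = -1 := by
  simpa [yWeight] using xyWeight_X_mul_X_pow (R := R) 0

theorem xyWeight_X_sq_mul (g : MvPolynomial (Fin 2) R) : xyWeight R (X 0 ^ 2 * g) = 0 := by
  rw [xyWeight, Module.Basis.constr_apply]
  refine Finset.sum_eq_zero fun m _ => ?_
  dsimp only
  split_ifs with hm
  · have hcoeff : (basisMonomials (Fin 2) R).repr (X 0 ^ 2 * g) m = 0 := by
      change coeff m (X 0 ^ 2 * g) = 0
      rw [X_pow_eq_monomial, coeff_monomial_mul', if_neg (by rw [Finsupp.single_le_iff]; omega)]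
    rw [hcoeff, zero_smul]
  · exact smul_zero _

variable (R) in
noncomputable def xyWeightKernel : NonUnitalSubring (MvPolynomial (Fin 2) R) where
  carrier := {f | f ∈ Ideal.span {X 0} ∧ xyWeight R f = 0}
  zero_mem' := ⟨zero_mem _, map_zero _⟩
  add_mem' ha hb := ⟨add_mem ha.1 hb.1, by rw [map_add, ha.2, hb.2, add_zero]⟩
  neg_mem' ha := ⟨neg_mem ha.1, by rw [map_neg, ha.2, neg_zero]⟩
  mul_mem' {a b} ha hb := by
    obtain ⟨a', rfl⟩ := Ideal.mem_span_singleton'.mp ha.1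
    obtain ⟨b', rfl⟩ := Ideal.mem_span_singleton'.mp hb.1
    refine ⟨Ideal.mul_mem_left _ _ hb.1, ?_⟩
    rw [show a' * X 0 * (b' * X 0) = X 0 ^ 2 * (a' * b') by ring]
    exact xyWeight_X_sq_mul _

theorem X_zero_notMem_xyWeightKernel [Nontrivial R] : X 0 ∉ xyWeightKernel R := fun h =>
  one_ne_zero <| neg_eq_zero.mp <| xyWeight_X_zero (R := R) ▸ h.2

variable (R) in
noncomputable def shiftedX (i : ℕ) : MvPolynomial (Fin 2) R :=
  X 0 + X 0 * X 1 ^ (2 * i) - X 0 * X 1 ^ i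

theorem shiftedX_mem_xyWeightKernel {i : ℕ} (hi : i ≠ 0) : shiftedX R i ∈ xyWeightKernel R := by
  refine ⟨Ideal.mem_span_singleton'.mpr ⟨1 + X 1 ^ (2 * i) - X 1 ^ i, by rw [shiftedX]; ring⟩, ?_⟩
  rw [shiftedX, map_sub, map_add, xyWeight_X_zero, xyWeight_X_mul_X_pow, xyWeight_X_mul_X_pow,
    yWeight_two_mul hi]
  ring

end Weight

theorem not_isFinSep (R : Type) [CommRing R] [Nontrivial R] :
    ¬ IsFinSep (MvPolynomial (Fin 2) R) := by
  intro h
  let A := NonUnitalSubring.closure {f | ∃ i ≠ 0, shiftedX R i = f}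
  have hA : A ≤ xyWeightKernel R := NonUnitalSubring.closure_le.mpr <| by
    rintro _ ⟨i, hi, rfl⟩
    exact shiftedX_mem_xyWeightKernel hi
  obtain ⟨F, _, _, φ, hφ⟩ := h (X 0) A fun hx => X_zero_notMem_xyWeightKernel (hA hx)
  obtain ⟨i, hi, hφi⟩ := φ.toMulHom.exists_map_pow_two_mul_eq_map_pow (X 1)
  change φ (X 1 ^ (2 * i)) = φ (X 1 ^ i) at hφi
  refine hφ ⟨shiftedX R i, NonUnitalSubring.subset_closure ⟨i, hi.ne', rfl⟩, ?_⟩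
  rw [shiftedX, map_sub, map_add, map_mul, map_mul, hφi, add_sub_cancel_right]

end MvPolynomial

/-- The polynomial ring in two commuting variables over a field is not finitely separable. -/
theorem stmt6 (R : Type) [Field R] : ¬ IsFinSep (MvPolynomial (Fin 2) R) :=
  MvPolynomial.not_isFinSep R
end

section
/- Let $a$ be an element of a ring $K$ such that $\ell \cdot \tilde{f}(a) = 0$ for some monic integer polynomial $\tilde{f}(x)$ without constant term and some positive integer $\ell$. Then the minimal polynomial $f(x)$ of $a$ has the form $f(x) = d \cdot f^*(x)$, where $d$ is a positive integer and $f^*(x)$ is a monic integer polynomial without constant term. -/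
/-- `f` is a minimal polynomial of `a`: a nonzero integer polynomial without constant
term annihilating `a`, of least degree, and with smallest positive leading coefficient
among such polynomials of that degree. -/
def IsMinPoly {K : Type} [NonUnitalRing K] (a : K) (f : Polynomial ℤ) : Prop :=
  f ≠ 0 ∧ f.coeff 0 = 0 ∧ evalnc f a = 0 ∧ 0 < f.leadingCoeff ∧
    (∀ g : Polynomial ℤ, g ≠ 0 → g.coeff 0 = 0 → evalnc g a = 0 →
      f.natDegree ≤ g.natDegree) ∧
    (∀ g : Polynomial ℤ, g ≠ 0 → g.coeff 0 = 0 → evalnc g a = 0 →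
      g.natDegree = f.natDegree → 0 < g.leadingCoeff → f.leadingCoeff ≤ g.leadingCoeff)

/-!
Integer polynomials without constant term annihilating `a` are exactly the kernel of the
evaluation `aeval a : ℤ[X] → Unitization ℤ K`, an ideal in which the minimal polynomial `f`
has least degree. Pseudo-dividing `l • f̃` by `f` therefore leaves no remainder, so `f`
divides `c • f̃` for some `c ≠ 0`. By Gauss's lemma the primitive part of `f` divides the
monic `f̃`, so its leading coefficient is a unit; it is positive, hence `1`, and
`f = content f • primPart f`.
-/

open Polynomial

section Unitization

variable {K : Type} [NonUnitalRing K]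

lemma aeval_inr (p : ℤ[X]) (a : K) :
    aeval (a : Unitization ℤ K) p =
      Unitization.inl (p.coeff 0) + ((evalnc p a : K) : Unitization ℤ K) := by
  have hsum := map_sum (Unitization.inrNonUnitalAlgHom ℤ K)
    (fun i => p.coeff (i + 1) • ppow a i) (Finset.range p.natDegree)
  simp only [Unitization.inrNonUnitalAlgHom_toFun, Unitization.inr_smul, inr_ppow] at hsum
  rw [aeval_eq_sum_range, Finset.sum_range_succ', evalnc, hsum, add_comm, pow_zero,
    ← Algebra.algebraMap_eq_smul_one, Unitization.algebraMap_eq_inl]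

lemma aeval_inr_eq_zero_iff (p : ℤ[X]) (a : K) :
    aeval (a : Unitization ℤ K) p = 0 ↔ p.coeff 0 = 0 ∧ evalnc p a = 0 := by
  simp [aeval_inr, Unitization.ext_iff]

end Unitization

namespace Polynomial

section IsDomain

variable {R : Type*} [CommRing R] [IsDomain R]

theorem natDegree_C_leadingCoeff_mul_sub_lt {f g : R[X]} (hf : f ≠ 0) (hg : g ≠ 0)
    (hfg : f.natDegree ≤ g.natDegree)
    (hne : C f.leadingCoeff * g - C g.leadingCoeff * X ^ (g.natDegree - f.natDegree) * f ≠ 0) :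
    (C f.leadingCoeff * g - C g.leadingCoeff * X ^ (g.natDegree - f.natDegree) * f).natDegree <
      g.natDegree := by
  have hlf : f.leadingCoeff ≠ 0 := leadingCoeff_ne_zero.mpr hf
  have hlg : g.leadingCoeff ≠ 0 := leadingCoeff_ne_zero.mpr hg
  have hdeg : (C f.leadingCoeff * g).degree = g.degree := degree_C_mul hlf
  refine natDegree_lt_natDegree hne ((degree_sub_lt_left ?_ ?_ ?_).trans_eq hdeg)
  · rw [hdeg, degree_mul, degree_C_mul_X_pow _ hlg, degree_eq_natDegree hf,
      degree_eq_natDegree hg, ← Nat.cast_add, Nat.sub_add_cancel hfg]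
  · exact mul_ne_zero (C_ne_zero.mpr hlf) hg
  · rw [leadingCoeff_mul, leadingCoeff_mul, leadingCoeff_C_mul_X_pow, leadingCoeff_C, mul_comm]

theorem exists_dvd_C_leadingCoeff_pow_mul {I : Ideal R[X]} {f : R[X]} (hfI : f ∈ I)
    (hmin : ∀ g ∈ I, g ≠ 0 → f.natDegree ≤ g.natDegree) {g : R[X]} (hgI : g ∈ I) :
    ∃ k : ℕ, f ∣ C (f.leadingCoeff ^ k) * g := by
  induction hn : g.natDegree using Nat.strong_induction_on generalizing g with
  | _ n ih =>
  by_cases hg : g = 0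
  · exact ⟨0, by simp [hg]⟩
  set r := C f.leadingCoeff * g - C g.leadingCoeff * X ^ (g.natDegree - f.natDegree) * f
  have hrI : r ∈ I := I.sub_mem (I.mul_mem_left _ hgI) (I.mul_mem_left _ hfI)
  obtain ⟨k, hk⟩ : ∃ k : ℕ, f ∣ C (f.leadingCoeff ^ k) * r := by
    by_cases hr : r = 0
    · exact ⟨0, by simp [hr]⟩
    have hf : f ≠ 0 := by rintro rfl; simp [r] at hr
    exact ih _ (hn ▸ natDegree_C_leadingCoeff_mul_sub_lt hf hg (hmin g hgI hg) hr) hrI rfl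
  refine ⟨k + 1, ?_⟩
  have hsplit : C (f.leadingCoeff ^ (k + 1)) * g =
      C (f.leadingCoeff ^ k) * r +
        C (f.leadingCoeff ^ k) * C g.leadingCoeff * X ^ (g.natDegree - f.natDegree) * f := by
    rw [pow_succ, C_mul]; ring
  rw [hsplit]
  exact dvd_add hk (dvd_mul_left f _)

end IsDomain

section NormalizedGCDMonoid

variable {R : Type*} [CommRing R] [IsDomain R] [NormalizedGCDMonoid R]

theorem primPart_dvd_of_dvd_C_mul {f g : R[X]} {c : R} (hc : c ≠ 0) (hg : g.IsPrimitive)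
    (h : f ∣ C c * g) : f.primPart ∣ g := by
  have hcg : C c * g ≠ 0 := mul_ne_zero (C_ne_zero.mpr hc) hg.ne_zero
  have hf : f.primPart ∣ (C c * g).primPart :=
    ((isPrimitive_primPart f).dvd_primPart_iff_dvd hcg).mpr ((primPart_dvd f).trans h)
  refine hf.trans ((associated_primPart_mul hcg).dvd.trans ?_)
  rw [hg.primPart_eq]
  exact (isUnit_primPart_C c).mul_left_dvd.mpr dvd_rfl

theorem coeff_primPart_eq_zero {p : R[X]} {n : ℕ} (hp : p ≠ 0) (hn : p.coeff n = 0) :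
    p.primPart.coeff n = 0 := by
  have h := congrArg (coeff · n) p.eq_C_content_mul_primPart
  simp only [coeff_C_mul, hn] at h
  exact (mul_eq_zero.mp h.symm).resolve_left (content_eq_zero_iff.not.mpr hp)

end NormalizedGCDMonoid

end Polynomial

theorem Int.monic_primPart_of_dvd_monic {p q : ℤ[X]} (hp : 0 < p.leadingCoeff) (hq : q.Monic)
    (h : p.primPart ∣ q) : p.primPart.Monic := by
  have hlc : p.leadingCoeff = p.content * p.primPart.leadingCoeff := by
    conv_lhs => rw [p.eq_C_content_mul_primPart]
    rw [leadingCoeff_mul, leadingCoeff_C]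
  have hcontent : 0 ≤ p.content := Int.nonneg_of_normalize_eq_self p.normalize_content
  rcases Int.isUnit_iff.mp (hq.isUnit_leadingCoeff_of_dvd h) with h1 | h1
  · exact h1
  · rw [h1] at hlc; nlinarith

/-- If `l • ftilde(a) = 0` for a monic integer polynomial without constant term and a
positive integer `l`, then the minimal polynomial of `a` is a positive integer multiple
of a monic integer polynomial without constant term. -/
theorem stmt9 (K : Type) [NonUnitalRing K] (a : K) (ftilde : Polynomial ℤ) (l : ℕ)
    (hl : 0 < l) (hmon : ftilde.Monic) (hc : ftilde.coeff 0 = 0)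
    (hann : (l : ℤ) • evalnc ftilde a = 0)
    (f : Polynomial ℤ) (hf : IsMinPoly a f) :
    ∃ (d : ℕ) (fstar : Polynomial ℤ), 0 < d ∧ fstar.Monic ∧ fstar.coeff 0 = 0 ∧
      f = Polynomial.C (d : ℤ) * fstar := by
  obtain ⟨hf0, hfc, hfe, hflead, hmin, -⟩ := hf
  let I := RingHom.ker (aeval (R := ℤ) (a : Unitization ℤ K))
  have hfI : f ∈ I := (aeval_inr_eq_zero_iff f a).mpr ⟨hfc, hfe⟩
  have hminI : ∀ g ∈ I, g ≠ 0 → f.natDegree ≤ g.natDegree := fun g hgI hg =>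
    hmin g hg ((aeval_inr_eq_zero_iff g a).mp hgI).1 ((aeval_inr_eq_zero_iff g a).mp hgI).2
  have hlI : C (l : ℤ) * ftilde ∈ I := by
    rw [RingHom.mem_ker, C_mul', map_smul, aeval_inr, hc, Unitization.inl_zero, zero_add,
      ← Unitization.inr_smul, hann, Unitization.inr_zero]
  obtain ⟨k, hk⟩ := exists_dvd_C_leadingCoeff_pow_mul hfI hminI hlI
  rw [← mul_assoc, ← C_mul] at hk
  have hmonic : f.primPart.Monic := Int.monic_primPart_of_dvd_monic hflead hmon
    (primPart_dvd_of_dvd_C_mul (by positivity) hmon.isPrimitive hk)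
  have hcontent : f.content = f.leadingCoeff := by
    conv_rhs => rw [f.eq_C_content_mul_primPart]
    rw [leadingCoeff_mul, leadingCoeff_C, hmonic.leadingCoeff, mul_one]
  refine ⟨f.leadingCoeff.toNat, f.primPart, by omega, hmonic, coeff_primPart_eq_zero hf0 hfc, ?_⟩
  rw [Int.toNat_of_nonneg hflead.le, ← hcontent]
  exact f.eq_C_content_mul_primPart
end

section
/- Let $K$ be a finitely generated (as a ring) ring and $I$ a two-sided ideal of $K$ such that the additive group of $K/I$ is finitely generated. Then $I$ is a finitely generated ring. -/
open Pointwise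

theorem AddSubgroup.FG.of_le {G : Type*} [AddCommGroup G] {H L : AddSubgroup G} (hL : L.FG)
    (hHL : H ≤ L) : H.FG := by
  rw [← H.toIntSubmodule_toAddSubgroup, ← Submodule.fg_iff_addSubgroup_fg]
  rw [← L.toIntSubmodule_toAddSubgroup, ← Submodule.fg_iff_addSubgroup_fg] at hL
  exact hL.of_le hHL

theorem AddSubgroup.exists_finset_closure_sup_eq_top {G : Type*} [AddGroup G] {H : AddSubgroup G}
    [H.Normal] (hG : AddGroup.FG (G ⧸ H)) : ∃ M : Finset G, closure (M : Set G) ⊔ H = ⊤ := by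
  classical
  obtain ⟨Q, hQ⟩ := hG.out
  refine ⟨Q.image Quotient.out, ?_⟩
  have hmap : (closure (Q.image Quotient.out : Set G)).map (QuotientAddGroup.mk' H) = ⊤ := by
    rw [AddMonoidHom.map_closure, Finset.coe_image, ← Set.image_comp]
    convert hQ
    ext q
    simp
  have h := comap_map_eq (QuotientAddGroup.mk' H) (closure (Q.image Quotient.out : Set G))
  rwa [hmap, comap_top, QuotientAddGroup.ker_mk', eq_comm] at h

namespace NonUnitalSubring

variable {R : Type*} [NonUnitalRing R]

theorem closure_closure_coe_preimage {s : Set R} :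
    closure ((Subtype.val : closure s → R) ⁻¹' s) = ⊤ :=
  eq_top_iff.2 fun x _ ↦ Subtype.recOn x fun _ hx ↦
    closure_induction (fun _ h ↦ subset_closure h) (zero_mem _) (fun _ _ _ _ ↦ add_mem)
      (fun _ _ ↦ neg_mem) (fun _ _ _ _ ↦ mul_mem) hx

theorem exists_finset_closure_eq_top_of_finite {s : Set R} (hs : s.Finite) :
    ∃ t : Finset (closure s), closure (t : Set (closure s)) = ⊤ :=
  ⟨hs.toFinset.preimage Subtype.val Subtype.val_injective.injOn, by
    rw [Finset.coe_preimage, Set.Finite.coe_toFinset, closure_closure_coe_preimage]⟩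

theorem closure_toAddSubgroup_le_of_mul_mem {s : Set R} (A : AddSubgroup R) (hsA : s ⊆ A)
    (hA : ∀ a ∈ A, ∀ x ∈ s, a * x ∈ A) : (closure s).toAddSubgroup ≤ A := by
  let C : NonUnitalSubring R :=
    { carrier := {k | k ∈ A ∧ ∀ a ∈ A, a * k ∈ A}
      zero_mem' := ⟨zero_mem A, fun a _ ↦ by simp⟩
      add_mem' := fun ⟨hx, hxA⟩ ⟨hy, hyA⟩ ↦
        ⟨add_mem hx hy, fun a ha ↦ by simpa [mul_add] using add_mem (hxA a ha) (hyA a ha)⟩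
      neg_mem' := fun ⟨hx, hxA⟩ ↦ ⟨neg_mem hx, fun a ha ↦ by simpa using neg_mem (hxA a ha)⟩
      mul_mem' := fun ⟨_, hxA⟩ ⟨_, hyA⟩ ↦
        ⟨hyA _ ‹_›, fun a ha ↦ mul_assoc a _ _ ▸ hyA _ (hxA a ha)⟩ }
  have hsC : closure s ≤ C := closure_le.2 fun x hx ↦ ⟨hsA hx, fun a ha ↦ hA a ha x hx⟩
  exact fun x hx ↦ (hsC hx).1

theorem mul_mem_closure_union_mul {s M T : Set R} (hsM : s ⊆ M)
    (hMs : ∀ m ∈ M, ∀ x ∈ s, m * x ∈ AddSubgroup.closure M ⊔ (closure (T ∪ T * M)).toAddSubgroup)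
    {j x : R} (hj : j ∈ closure (T ∪ T * M)) (hx : x ∈ s) : j * x ∈ closure (T ∪ T * M) := by
  have hTJ : T ⊆ closure (T ∪ T * M) := fun t ht ↦ subset_closure (Or.inl ht)
  have hTA : ∀ t ∈ T, ∀ a ∈ AddSubgroup.closure M ⊔ (closure (T ∪ T * M)).toAddSubgroup,
      t * a ∈ closure (T ∪ T * M) := by
    intro t ht a ha
    obtain ⟨u, hu, j, hj, rfl⟩ := AddSubgroup.mem_sup.1 ha
    have hMJ : AddSubgroup.closure M ≤
        (closure (T ∪ T * M)).toAddSubgroup.comap (AddMonoidHom.mulLeft t) :=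
      (AddSubgroup.closure_le _).2 fun m hm ↦ subset_closure (Or.inr (Set.mul_mem_mul ht hm))
    exact mul_add t u j ▸ add_mem (hMJ hu) (mul_mem (hTJ ht) hj)
  induction hj using closure_induction with
  | mem y hy =>
    obtain hy | ⟨t, ht, m, hm, rfl⟩ := hy
    · exact hTA y hy x (AddSubgroup.mem_sup_left (AddSubgroup.subset_closure (hsM hx)))
    · exact mul_assoc t m x ▸ hTA t ht _ (hMs m hm x hx)
  | zero => simp
  | add a b _ _ ha hb => exact add_mul a b x ▸ add_mem ha hb
  | neg a _ ha => exact neg_mul a x ▸ neg_mem ha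
  | mul a b ha _ _ hb => exact mul_assoc a b x ▸ mul_mem ha hb

theorem closure_union_mul_eq_of_sup_eq_top {s M T : Set R} {I : NonUnitalSubring R}
    (hs : closure s = ⊤) (hsM : s ⊆ M) (hI : ∀ x ∈ I, ∀ y : R, x * y ∈ I)
    (hMI : AddSubgroup.closure M ⊔ I.toAddSubgroup = ⊤)
    (hT : AddSubgroup.closure T = I.toAddSubgroup ⊓ AddSubgroup.closure (M ∪ M * s)) :
    closure (T ∪ T * M) = I := by
  set U := AddSubgroup.closure M
  set V := AddSubgroup.closure (M ∪ M * s)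
  set J := closure (T ∪ T * M)
  set A := U ⊔ J.toAddSubgroup
  have hTI : T ⊆ I := fun t ht ↦
    (AddSubgroup.mem_inf.1 (hT ▸ AddSubgroup.subset_closure ht : t ∈ I.toAddSubgroup ⊓ V)).1
  have hJI : J ≤ I :=
    closure_le.2 <| Set.union_subset hTI fun _ ⟨t, ht, m, _, htm⟩ ↦ htm ▸ hI t (hTI ht) m
  have hIV : I.toAddSubgroup ⊓ V ≤ J.toAddSubgroup :=
    hT ▸ (AddSubgroup.closure_le _).2 fun t ht ↦ subset_closure (Or.inl ht)
  have hUV : U ≤ V := AddSubgroup.closure_mono Set.subset_union_left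
  have hVA : V ≤ A := by
    intro v hv
    obtain ⟨u, hu, i, hi, rfl⟩ := AddSubgroup.mem_sup.1 (hMI ▸ AddSubgroup.mem_top v)
    have hiV : i ∈ V := by simpa using sub_mem hv (hUV hu)
    exact add_mem (AddSubgroup.mem_sup_left hu) (AddSubgroup.mem_sup_right (hIV ⟨hi, hiV⟩))
  have hMs : ∀ m ∈ M, ∀ x ∈ s, m * x ∈ A := fun m hm x hx ↦
    hVA (AddSubgroup.subset_closure (Or.inr (Set.mul_mem_mul hm hx)))
  have hA : A = ⊤ := by
    have hsA : s ⊆ A := fun x hx ↦ AddSubgroup.mem_sup_left (AddSubgroup.subset_closure (hsM hx))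
    have hAs : ∀ a ∈ A, ∀ x ∈ s, a * x ∈ A := by
      intro a ha x hx
      obtain ⟨u, hu, j, hj, rfl⟩ := AddSubgroup.mem_sup.1 ha
      have hUs : U ≤ V.comap (AddMonoidHom.mulRight x) := (AddSubgroup.closure_le _).2
        fun m hm ↦ AddSubgroup.subset_closure (Or.inr (Set.mul_mem_mul hm hx))
      exact add_mul u j x ▸ add_mem (hVA (hUs hu))
        (AddSubgroup.mem_sup_right (mul_mem_closure_union_mul hsM hMs hj hx))
    have h := closure_toAddSubgroup_le_of_mul_mem A hsA hAs
    rw [hs] at h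
    exact eq_top_iff.2 h
  refine le_antisymm hJI fun k hk ↦ ?_
  obtain ⟨u, hu, j, hj, rfl⟩ := AddSubgroup.mem_sup.1 (hA ▸ AddSubgroup.mem_top k)
  have huI : u ∈ I := by simpa using sub_mem hk (hJI hj)
  exact add_mem (hIV ⟨huI, hUV hu⟩) hj

end NonUnitalSubring

/-- If `K` is a finitely generated ring and `I` a two-sided ideal such that the additive
group of `K/I` is finitely generated, then `I` is a finitely generated ring. -/
theorem stmt12 (K : Type) [NonUnitalRing K]
    (hK : ∃ s : Finset K, NonUnitalSubring.closure (s : Set K) = ⊤)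
    (I : NonUnitalSubring K)
    (hI : ∀ x ∈ I, ∀ y : K, x * y ∈ I ∧ y * x ∈ I)
    (hq : AddGroup.FG (K ⧸ I.toAddSubgroup)) :
    ∃ t : Finset I, NonUnitalSubring.closure (t : Set I) = ⊤ := by
  obtain ⟨s, hs⟩ := hK
  obtain ⟨M₀, hM₀⟩ := AddSubgroup.exists_finset_closure_sup_eq_top hq
  set M : Set K := s ∪ M₀
  have hMfin : M.Finite := s.finite_toSet.union M₀.finite_toSet
  have hMI : AddSubgroup.closure M ⊔ I.toAddSubgroup = ⊤ :=
    eq_top_iff.2 (hM₀ ▸ sup_le_sup_right (AddSubgroup.closure_mono Set.subset_union_right) _)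
  have hVfg : (AddSubgroup.closure (M ∪ M * s)).FG :=
    (AddSubgroup.fg_iff _).2 ⟨_, rfl, hMfin.union (hMfin.mul s.finite_toSet)⟩
  obtain ⟨T, hT⟩ := hVfg.of_le (inf_le_right (a := I.toAddSubgroup))
  have hI' := NonUnitalSubring.closure_union_mul_eq_of_sup_eq_top hs Set.subset_union_left
    (fun x hx y ↦ (hI x hx y).1) hMI hT
  subst hI'
  exact NonUnitalSubring.exists_finset_closure_eq_top_of_finite
    (T.finite_toSet.union (T.finite_toSet.mul hMfin))
end

section
/- Let $K$ be a finitely generated ring and $I$ a two-sided ideal of $K$ such that the additive group of $K/I$ is finitely generated and $I$ itself, as a ring, is finitely separable. Then $K$ is finitely separable. -/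
theorem AddCommGroup.exists_nsmul_ne_of_ne_zero {G : Type*} [AddCommGroup G] [AddGroup.FG G]
    {g : G} (hg : g ≠ 0) : ∃ n : ℕ, 0 < n ∧ ∀ x : G, n • x ≠ g := by
  by_contra! hdiv
  have : Module.Finite ℤ G := Module.Finite.iff_addGroup_fg.mpr ‹_›
  -- Krull's intersection theorem, applied to the ideal `(m)` of `ℤ`
  have hkrull : ∀ m : ℕ, 0 < m → ∃ r : ℤ, (m : ℤ) ∣ r ∧ (1 - r) • g = 0 := by
    intro m hm
    have hmem : g ∈ ⨅ i : ℕ, Ideal.span {(m : ℤ)} ^ i • (⊤ : Submodule ℤ G) := by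
      refine Submodule.mem_iInf _ |>.mpr fun i => ?_
      obtain ⟨x, hx⟩ := hdiv (m ^ i) (pow_pos hm i)
      rw [Ideal.span_singleton_pow, ← hx, ← natCast_zsmul, Nat.cast_pow]
      exact Submodule.smul_mem_smul (Ideal.mem_span_singleton_self _) trivial
    obtain ⟨⟨r, hr⟩, hrg⟩ := (Ideal.mem_iInf_smul_pow_eq_bot_iff _ g).mp hmem
    exact ⟨r, Ideal.mem_span_singleton.mp hr, by rw [sub_smul, one_smul, hrg, sub_self]⟩
  rcases Nat.eq_zero_or_pos (addOrderOf g) with hinf | hpos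
  · obtain ⟨r, ⟨k, rfl⟩, hr⟩ := hkrull 2 two_pos
    rw [← addOrderOf_dvd_iff_zsmul_eq_zero, hinf, Nat.cast_zero, zero_dvd_iff] at hr
    omega
  · obtain ⟨r, hdr, hr⟩ := hkrull _ hpos
    have hd1 : (addOrderOf g : ℤ) ∣ 1 := by
      simpa using dvd_add (addOrderOf_dvd_iff_zsmul_eq_zero.mpr hr) hdr
    exact hg <| AddMonoid.addOrderOf_eq_one_iff.mp <| by
      exact_mod_cast Int.eq_one_of_dvd_one (by positivity) hd1

theorem QuotientAddGroup.exists_finite_closure_sub_mem {G : Type*} [AddCommGroup G]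
    (H : AddSubgroup G) [AddGroup.FG (G ⧸ H)] :
    ∃ C : Set G, C.Finite ∧ ∀ u, ∃ γ ∈ AddSubgroup.closure C, u - γ ∈ H := by
  obtain ⟨S, hS, hSfin⟩ := AddGroup.fg_iff.mp ‹_›
  refine ⟨Quotient.out '' S, hSfin.image _, fun u => ?_⟩
  have hu : (u : G ⧸ H) ∈ AddSubgroup.closure S := hS ▸ AddSubgroup.mem_top _
  have hlift : (QuotientAddGroup.mk' H) '' (Quotient.out '' S) = S := by
    simp [Set.image_image]
  rw [← hlift, ← AddMonoidHom.map_closure] at hu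
  obtain ⟨γ, hγ, hγu⟩ := hu
  exact ⟨γ, hγ, by simpa [QuotientAddGroup.eq, sub_eq_neg_add] using hγu⟩

universe u

section

variable {K : Type u} [NonUnitalRing K]

def RingCon.mkₙ_s13 (c : RingCon K) : K →ₙ+* c.Quotient where
  toFun := (↑)
  map_mul' _ _ := rfl
  map_zero' := rfl
  map_add' _ _ := rfl

theorem RingCon.mkₙ_surjective_s13 (c : RingCon K) : Function.Surjective c.mkₙ_s13 :=
  Quotient.mk''_surjective

theorem TwoSidedIdeal.mkₙ_eq_mkₙ_iff (J : TwoSidedIdeal K) {x y : K} :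
    J.ringCon.mkₙ_s13 x = J.ringCon.mkₙ_s13 y ↔ x - y ∈ J :=
  (RingCon.eq _).trans (J.rel_iff x y)

theorem TwoSidedIdeal.addGroupFG_quotient_of_closure (J : TwoSidedIdeal K) {C : Set K}
    (hC : C.Finite) (hCJ : ∀ u, ∃ γ ∈ AddSubgroup.closure C, u - γ ∈ J) :
    AddGroup.FG J.ringCon.Quotient := by
  refine AddGroup.fg_iff.mpr ⟨J.ringCon.mkₙ_s13 '' C, eq_top_iff.mpr fun q _ => ?_, hC.image _⟩
  obtain ⟨u, rfl⟩ := J.ringCon.mkₙ_surjective_s13 q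
  obtain ⟨γ, hγ, huγ⟩ := hCJ u
  rw [J.mkₙ_eq_mkₙ_iff.mpr huγ]
  exact AddMonoidHom.map_closure J.ringCon.mkₙ_s13.toAddMonoidHom C ▸ AddSubgroup.mem_map_of_mem _ hγ

variable (K) in
def TwoSidedIdeal.rangeNSMul (n : ℕ) : TwoSidedIdeal K :=
  .mk' (Set.range (n • · : K → K)) ⟨0, smul_zero n⟩
    (by rintro _ _ ⟨x, rfl⟩ ⟨y, rfl⟩; exact ⟨x + y, smul_add n x y⟩)
    (by rintro _ ⟨x, rfl⟩; exact ⟨-x, smul_neg n x⟩)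
    (by rintro x _ ⟨y, rfl⟩; exact ⟨x * y, (mul_smul_comm n x y).symm⟩)
    (by rintro _ y ⟨x, rfl⟩; exact ⟨x * y, (smul_mul_assoc n x y).symm⟩)

theorem TwoSidedIdeal.mem_rangeNSMul {n : ℕ} {x : K} : x ∈ rangeNSMul K n ↔ ∃ y, n • y = x :=
  mem_mk' ..

theorem NonUnitalRing.exists_finite_separating_of_addGroupFG [AddGroup.FG K]
    {B : AddSubgroup K} {g : K} (hg : g ∉ B) :
    ∃ (F : Type u) (_ : NonUnitalRing F) (_ : Finite F) (φ : K →ₙ+* F), φ g ∉ φ '' B := by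
  obtain ⟨n, hn, hgn⟩ := AddCommGroup.exists_nsmul_ne_of_ne_zero (g := (g : K ⧸ B))
    (by rwa [Ne, QuotientAddGroup.eq_zero_iff])
  let L := TwoSidedIdeal.rangeNSMul K n
  refine ⟨L.ringCon.Quotient, inferInstance, ?_, L.ringCon.mkₙ_s13, ?_⟩
  · have := AddGroup.fg_of_surjective (f := L.ringCon.mkₙ_s13.toAddMonoidHom) L.ringCon.mkₙ_surjective_s13
    refine AddCommGroup.finite_of_fg_isAddTorsion _ fun q => ?_
    obtain ⟨y, rfl⟩ := L.ringCon.mkₙ_surjective_s13 q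
    refine isOfFinAddOrder_iff_nsmul_eq_zero.mpr ⟨n, hn, ?_⟩
    rw [← map_nsmul, ← map_zero L.ringCon.mkₙ_s13, L.mkₙ_eq_mkₙ_iff, sub_zero]
    exact TwoSidedIdeal.mem_rangeNSMul.mpr ⟨y, rfl⟩
  · rintro ⟨β, hβ, hβg⟩
    obtain ⟨y, hy⟩ := TwoSidedIdeal.mem_rangeNSMul.mp (L.mkₙ_eq_mkₙ_iff.mp hβg)
    refine hgn (-(y : K ⧸ B)) ?_
    rw [smul_neg, ← QuotientAddGroup.mk_nsmul, hy, QuotientAddGroup.mk_sub,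
      (QuotientAddGroup.eq_zero_iff β).mpr hβ, zero_sub, neg_neg]

theorem TwoSidedIdeal.exists_finite_separating (J : TwoSidedIdeal K)
    [AddGroup.FG J.ringCon.Quotient] {A : AddSubgroup K} {a : K} (ha : ∀ α ∈ A, a - α ∉ J) :
    ∃ (F : Type u) (_ : NonUnitalRing F) (_ : Finite F) (φ : K →ₙ+* F), φ a ∉ φ '' A := by
  obtain ⟨F, _, hF, ψ, hψ⟩ := NonUnitalRing.exists_finite_separating_of_addGroupFG
    (B := A.map J.ringCon.mkₙ_s13.toAddMonoidHom) (g := J.ringCon.mkₙ_s13 a)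
    (fun ⟨α, hα, hαa⟩ => ha α hα (J.mkₙ_eq_mkₙ_iff.mp hαa.symm))
  refine ⟨F, _, hF, ψ.comp J.ringCon.mkₙ_s13, ?_⟩
  rwa [NonUnitalRingHom.coe_comp, Set.image_comp]

namespace AddSubgroup

/-- The largest two-sided ideal of `K` contained in `N`. -/
def idealCore (N : AddSubgroup K) : TwoSidedIdeal K :=
  .mk' {z | z ∈ N ∧ (∀ u, u * z ∈ N) ∧ (∀ v, z * v ∈ N) ∧ ∀ u v, u * z * v ∈ N}
    ⟨N.zero_mem, by simp, by simp, by simp⟩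
    (fun ⟨hx, hxl, hxr, hxlr⟩ ⟨hy, hyl, hyr, hylr⟩ => ⟨N.add_mem hx hy,
      fun u => by simpa [mul_add] using N.add_mem (hxl u) (hyl u),
      fun v => by simpa [add_mul] using N.add_mem (hxr v) (hyr v),
      fun u v => by simpa [mul_add, add_mul] using N.add_mem (hxlr u v) (hylr u v)⟩)
    (fun ⟨hx, hxl, hxr, hxlr⟩ => ⟨N.neg_mem hx, fun u => by simpa using N.neg_mem (hxl u),
      fun v => by simpa using N.neg_mem (hxr v), fun u v => by simpa using N.neg_mem (hxlr u v)⟩)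
    (fun {x y} ⟨_, hyl, _, hylr⟩ => ⟨hyl x, fun u => by simpa [mul_assoc] using hyl (u * x),
      fun v => hylr x v, fun u v => by simpa [mul_assoc] using hylr (u * x) v⟩)
    (fun {x y} ⟨_, _, hxr, hxlr⟩ => ⟨hxr y, fun u => by simpa [mul_assoc] using hxlr u y,
      fun v => by simpa [mul_assoc] using hxr (y * v),
      fun u v => by simpa [mul_assoc] using hxlr u (y * v)⟩)

theorem mem_idealCore {N : AddSubgroup K} {z : K} :
    z ∈ N.idealCore ↔ z ∈ N ∧ (∀ u, u * z ∈ N) ∧ (∀ v, z * v ∈ N) ∧ ∀ u v, u * z * v ∈ N :=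
  TwoSidedIdeal.mem_mk' ..

theorem mem_idealCore_of_closure {N : AddSubgroup K} {I C : Set K}
    (hCI : ∀ u, ∃ γ ∈ closure C, u - γ ∈ I) (hIN : ∀ x ∈ I, ∀ z ∈ N, x * z ∈ N ∧ z * x ∈ N)
    {z : K} (hz : z ∈ N) (hl : ∀ γ ∈ C, γ * z ∈ N) (hr : ∀ γ ∈ C, z * γ ∈ N)
    (hlr : ∀ γ ∈ C, ∀ γ' ∈ C, γ * z * γ' ∈ N) : z ∈ N.idealCore := by
  have hl' : ∀ γ ∈ closure C, γ * z ∈ N := fun γ hγ =>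
    (closure_le (N.comap (AddMonoidHom.mulRight z))).mpr hl hγ
  have hr' : ∀ γ ∈ closure C, z * γ ∈ N := fun γ hγ =>
    (closure_le (N.comap (AddMonoidHom.mulLeft z))).mpr hr hγ
  have hlr' : ∀ γ ∈ closure C, ∀ γ' ∈ closure C, γ * z * γ' ∈ N := by
    intro γ hγ γ' hγ'
    have hC : ∀ γ₀ ∈ C, γ₀ * (z * γ') ∈ N := fun γ₀ hγ₀ => by
      simpa [mul_assoc] using (closure_le (N.comap (AddMonoidHom.mulLeft (γ₀ * z)))).mpr
        (hlr γ₀ hγ₀) hγ'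
    simpa [mul_assoc] using (closure_le (N.comap (AddMonoidHom.mulRight (z * γ')))).mpr hC hγ
  have hleft : ∀ u, u * z ∈ N := fun u => by
    obtain ⟨γ, hγ, hi⟩ := hCI u
    simpa [← add_mul] using N.add_mem (hl' γ hγ) (hIN _ hi z hz).1
  have hright : ∀ v, z * v ∈ N := fun v => by
    obtain ⟨γ, hγ, hi⟩ := hCI v
    simpa [← mul_add] using N.add_mem (hr' γ hγ) (hIN _ hi z hz).2
  refine mem_idealCore.mpr ⟨hz, hleft, hright, fun u v => ?_⟩
  obtain ⟨γ, hγ, hi⟩ := hCI u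
  obtain ⟨γ', hγ', hi'⟩ := hCI v
  have hsplit : u * z * v = γ * z * γ' + γ * z * (v - γ') + (u - γ) * (z * v) := by noncomm_ring
  rw [hsplit]
  exact N.add_mem (N.add_mem (hlr' γ hγ γ' hγ') (hIN _ hi' _ (hl' γ hγ)).2)
    (hIN _ hi _ (hright v)).1

theorem exists_finite_sub_mem_idealCore {N : AddSubgroup K} {I C : Set K}
    (hI : ∀ x ∈ I, ∀ y, x * y ∈ I ∧ y * x ∈ I) (hC : C.Finite)
    (hCI : ∀ u, ∃ γ ∈ closure C, u - γ ∈ I) (hIN : ∀ x ∈ I, ∀ z ∈ N, x * z ∈ N ∧ z * x ∈ N)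
    (hfin : ((↑) '' I : Set (K ⧸ N)).Finite) :
    ∃ T : Set K, T.Finite ∧ ∀ x ∈ I, ∃ t ∈ T, x - t ∈ N.idealCore := by
  have : Finite C := hC
  let π := QuotientAddGroup.mk' N
  let Θ : K →+ (K ⧸ N) × (C → K ⧸ N) × (C → K ⧸ N) × (C × C → K ⧸ N) :=
    π.prod <| (AddMonoidHom.pi fun γ : C => π.comp (AddMonoidHom.mulLeft γ)).prod <|
      (AddMonoidHom.pi fun γ : C => π.comp (AddMonoidHom.mulRight γ)).prod <|
      AddMonoidHom.pi fun p : C × C =>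
        π.comp ((AddMonoidHom.mulRight (p.2 : K)).comp (AddMonoidHom.mulLeft (p.1 : K)))
  have hker : ∀ z, Θ z = 0 → z ∈ N.idealCore := by
    intro z hz
    simp only [Θ, π, AddMonoidHom.prod_apply, QuotientAddGroup.mk'_apply, Prod.ext_iff,
      Prod.fst_zero, Prod.snd_zero, QuotientAddGroup.eq_zero_iff, funext_iff, AddMonoidHom.pi_apply,
      AddMonoidHom.coe_comp, AddMonoidHom.coe_mulLeft, AddMonoidHom.coe_mulRight,
      Function.comp_apply, Pi.zero_apply, Subtype.forall, Prod.forall] at hz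
    exact mem_idealCore_of_closure hCI hIN hz.1 hz.2.1 hz.2.2.1 hz.2.2.2
  have hΘfin : (Θ '' I).Finite := by
    refine (hfin.prod <| (Set.Finite.pi fun _ => hfin).prod <| (Set.Finite.pi fun _ => hfin).prod <|
      Set.Finite.pi fun _ => hfin).subset ?_
    rintro _ ⟨x, hx, rfl⟩
    simp only [Set.mem_prod, Set.mem_pi, Set.mem_univ, forall_const]
    exact ⟨⟨x, hx, rfl⟩, fun γ => ⟨_, (hI x hx γ).2, rfl⟩, fun γ => ⟨_, (hI x hx γ).1, rfl⟩,
      fun p => ⟨_, (hI _ (hI x hx p.1).2 p.2).1, rfl⟩⟩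
  obtain ⟨T, -, hTbij⟩ := Set.exists_subset_bijOn I Θ
  refine ⟨T, Set.Finite.of_finite_image (hTbij.image_eq ▸ hΘfin) hTbij.injOn, fun x hx => ?_⟩
  obtain ⟨t, ht, hΘ⟩ := hTbij.surjOn ⟨x, hx, rfl⟩
  exact ⟨t, ht, hker _ (by rw [map_sub, hΘ, sub_self])⟩

end AddSubgroup

theorem NonUnitalSubring.exists_twoSidedIdeal_le_ker (I : NonUnitalSubring K)
    (hI : ∀ x ∈ I, ∀ y : K, x * y ∈ I ∧ y * x ∈ I)
    [AddGroup.FG (K ⧸ I.toAddSubgroup)] {F : Type*} [NonUnitalRing F] [Finite F] (ψ : I →ₙ+* F) :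
    ∃ J : TwoSidedIdeal K, (∀ x ∈ J, ∃ hx : x ∈ I, ψ ⟨x, hx⟩ = 0) ∧
      AddGroup.FG J.ringCon.Quotient := by
  obtain ⟨C, hC, hCI⟩ := QuotientAddGroup.exists_finite_closure_sub_mem I.toAddSubgroup
  let N : AddSubgroup K :=
    (ψ.toAddMonoidHom.ker).map (NonUnitalSubringClass.subtype I).toAddMonoidHom
  have hmemN : ∀ x : I, (x : K) ∈ N ↔ ψ x = 0 := by
    intro x
    simp [N]
  have hIN : ∀ x ∈ I, ∀ z ∈ N, x * z ∈ N ∧ z * x ∈ N := by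
    rintro x hx _ ⟨z, hz, rfl⟩
    have hxz := (hmemN (⟨x, hx⟩ * z)).mpr (by simp_all)
    have hzx := (hmemN (z * ⟨x, hx⟩)).mpr (by simp_all)
    exact ⟨hxz, hzx⟩
  have hfin : ((↑) '' (I : Set K) : Set (K ⧸ N)).Finite := by
    -- the class of `x ∈ I` modulo `N` only depends on `ψ x`
    refine (Set.finite_range fun f : F => ((Function.invFun ψ f : I) : K ⧸ N)).subset ?_
    rintro _ ⟨x, hx, rfl⟩
    refine ⟨ψ ⟨x, hx⟩, QuotientAddGroup.eq.mpr ?_⟩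
    have hψ := Function.invFun_eq (f := ψ) ⟨⟨x, hx⟩, rfl⟩
    exact (hmemN (-_ + ⟨x, hx⟩)).mpr (by rw [map_add, map_neg, hψ, neg_add_cancel])
  obtain ⟨T, hT, hIT⟩ := N.exists_finite_sub_mem_idealCore hI hC hCI hIN hfin
  refine ⟨N.idealCore, fun x hx => ?_,
    N.idealCore.addGroupFG_quotient_of_closure (hC.union hT) fun u => ?_⟩
  · obtain ⟨y, hy, rfl⟩ := (AddSubgroup.mem_idealCore.mp hx).1
    exact ⟨y.2, hy⟩
  · obtain ⟨γ, hγ, hi⟩ := hCI u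
    obtain ⟨t, ht, hit⟩ := hIT _ hi
    refine ⟨γ + t, add_mem (AddSubgroup.closure_mono Set.subset_union_left hγ)
      (AddSubgroup.subset_closure (Or.inr ht)), ?_⟩
    rwa [← sub_sub]

end

theorem IsFinSep.exists_twoSidedIdeal_sub_notMem {K : Type} [NonUnitalRing K]
    {I : NonUnitalSubring K} (hIsep : IsFinSep I) (hI : ∀ x ∈ I, ∀ y : K, x * y ∈ I ∧ y * x ∈ I)
    [AddGroup.FG (K ⧸ I.toAddSubgroup)] {A : NonUnitalSubring K} {a : K} (haA : a ∉ A) :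
    ∃ J : TwoSidedIdeal K, AddGroup.FG J.ringCon.Quotient ∧ ∀ α ∈ A, a - α ∉ J := by
  by_cases h : ∃ α ∈ A, a - α ∈ I
  · obtain ⟨α, hα, hc⟩ := h
    have hcA : (⟨a - α, hc⟩ : I) ∉ A.comap (NonUnitalSubringClass.subtype I) :=
      fun h' => haA (by simpa using A.add_mem h' hα)
    obtain ⟨F, _, _, ψ, hψ⟩ := hIsep _ _ hcA
    obtain ⟨J, hJψ, hJ⟩ := I.exists_twoSidedIdeal_le_ker hI ψ
    refine ⟨J, hJ, fun α' hα' haJ => ?_⟩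
    obtain ⟨hI', hψ0⟩ := hJψ _ haJ
    have hβ : α' - α ∈ I := by simpa using I.sub_mem hc hI'
    have hsplit : (⟨a - α, hc⟩ : I) = ⟨α' - α, hβ⟩ + ⟨a - α', hI'⟩ :=
      Subtype.ext (sub_add_sub_cancel' _ _ _).symm
    exact hψ ⟨⟨α' - α, hβ⟩, A.sub_mem hα' hα, by rw [hsplit, map_add, hψ0, add_zero]⟩
  · push Not at h
    let I' : TwoSidedIdeal K := .mk' I I.zero_mem I.add_mem I.neg_mem
      (fun hy => (hI _ hy _).2) (fun hx => (hI _ hx _).1)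
    obtain ⟨C, hC, hCI⟩ := QuotientAddGroup.exists_finite_closure_sub_mem I.toAddSubgroup
    exact ⟨I', I'.addGroupFG_quotient_of_closure hC (by simpa [I'] using hCI),
      by simpa [I'] using h⟩

theorem stmt13_general (K : Type) [NonUnitalRing K]
    (I : NonUnitalSubring K)
    (hI : ∀ x ∈ I, ∀ y : K, x * y ∈ I ∧ y * x ∈ I)
    (hq : AddGroup.FG (K ⧸ I.toAddSubgroup))
    (hIsep : IsFinSep I) :
    IsFinSep K := by
  intro a A haA
  obtain ⟨J, hJ, haJ⟩ := hIsep.exists_twoSidedIdeal_sub_notMem hI haA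
  exact J.exists_finite_separating (A := A.toAddSubgroup) haJ

/-- If `K` is a finitely generated ring, `I` a two-sided ideal with `K/I` having
finitely generated additive group, and `I` is itself finitely separable as a ring,
then `K` is finitely separable. -/
theorem stmt13 (K : Type) [NonUnitalRing K]
    (hK : ∃ s : Finset K, NonUnitalSubring.closure (s : Set K) = ⊤)
    (I : NonUnitalSubring K)
    (hI : ∀ x ∈ I, ∀ y : K, x * y ∈ I ∧ y * x ∈ I)
    (hq : AddGroup.FG (K ⧸ I.toAddSubgroup))
    (hIsep : IsFinSep I) :
    IsFinSep K :=
  stmt13_general K I hI hq hIsep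
end

section
/- Let $K$ be a ring of prime characteristic $p$ containing an element $b$, such that $K$ is finitely generated as a module over the subring $\mathbb{Z}\langle b \rangle$ generated by $b$. Then for every $a \in K$ and every subring $A \subseteq K$ with $b \in A$ and $a \notin A$, there exists a finite ring $F$ and a homomorphism $\varphi : K \to F$ with $\varphi(a) \notin \varphi(A)$. -/
/-!
Let `X` act on `K` as left multiplication by `b`. This makes `K` a finitely generated module over
`𝔽_p[X]` in which `A` is a submodule. Finitely generated modules over `𝔽_p[X]` are residually
finite, so some `𝔽_p[X]`-linear `f : K → T` with `T` finite kills `A` but not `a`. Since the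
finitely many maps `x ↦ f (c * x)`, `c` in a generating set, control all `x ↦ f (y * x)`, the set
`L = {x | f x = 0 ∧ ∀ y, f (y * x) = 0}` is a left ideal of finite index. The left regular
representation of the unitization of `K` on its quotient by `L` is a homomorphism to a finite ring
whose kernel lies in `L ⊆ ker f`.
-/

open scoped Pointwise

open Polynomial

theorem exists_polynomial_module_X_smul_eq_mul {R K : Type} [CommRing R] [NonUnitalRing K]
    [Module R K] [IsScalarTower R K K] [SMulCommClass R K K] (b : K) :
    ∃ _ : Module R[X] K, IsScalarTower R[X] K K ∧ ∀ x, (X : R[X]) • x = b * x := by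
  let Lb : Module.End R K := LinearMap.mulLeft R b
  let _ : Module R[X] K := Module.compHom K (aeval Lb).toRingHom
  refine ⟨‹_›, ⟨fun q x y => ?_⟩, fun x => ?_⟩
  · have hcomm : Commute (LinearMap.mulRight R y) Lb := LinearMap.ext fun z => mul_assoc b z y
    exact LinearMap.congr_fun (Algebra.commute_of_mem_adjoin_singleton_of_commute
      (aeval_mem_adjoin_singleton R (p := q) Lb) hcomm) x
  · show aeval Lb X x = b * x
    rw [aeval_X]
    rfl

theorem NonUnitalSubring.smul_mem_of_X_smul_eq_mul {K : Type} [NonUnitalRing K] {n : ℕ}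
    [Module (ZMod n)[X] K] {b : K} (hX : ∀ x, (X : (ZMod n)[X]) • x = b * x)
    {A : NonUnitalSubring K} (hb : b ∈ A) (q : (ZMod n)[X]) {x : K} (hx : x ∈ A) : q • x ∈ A := by
  induction q using Polynomial.induction_on generalizing x with
  | C c =>
    rw [← ZMod.intCast_zmod_cast c, C_eq_intCast, Int.cast_smul_eq_zsmul]
    exact zsmul_mem hx _
  | add q r hq hr => rw [add_smul]; exact add_mem (hq hx) (hr hx)
  | monomial k c ih =>
    rw [pow_succ, ← mul_assoc, mul_smul, hX]
    exact ih (A.mul_mem hb hx)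

theorem NonUnitalSubring.exists_mul_eq_smul_of_mem_closure_singleton {R K : Type} [Ring R]
    [NonUnitalRing K] [Module R K] {b : K} {r : R} (hr : ∀ x, r • x = b * x) {u : K}
    (hu : u ∈ NonUnitalSubring.closure {b}) : ∃ q : R, ∀ x, u * x = q • x := by
  induction hu using NonUnitalSubring.closure_induction with
  | mem x hx => exact ⟨r, fun w => by rw [Set.mem_singleton_iff.mp hx, hr]⟩
  | zero => exact ⟨0, fun w => by simp⟩
  | add x y _ _ hx hy =>
    obtain ⟨q₁, h₁⟩ := hx
    obtain ⟨q₂, h₂⟩ := hy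
    exact ⟨q₁ + q₂, fun w => by rw [add_mul, h₁, h₂, add_smul]⟩
  | neg x _ hx =>
    obtain ⟨q, h⟩ := hx
    exact ⟨-q, fun w => by rw [neg_mul, h, neg_smul]⟩
  | mul x y _ _ hx hy =>
    obtain ⟨q₁, h₁⟩ := hx
    obtain ⟨q₂, h₂⟩ := hy
    exact ⟨q₁ * q₂, fun w => by rw [mul_assoc, h₂, h₁, mul_smul]⟩

theorem Module.Finite.of_forall_mem_closure_union_mul {R K : Type} [Ring R] [NonUnitalRing K]
    [Module R K] {b : K} {r : R} (hr : ∀ x, r • x = b * x) (s : Finset K)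
    (hs : ∀ x : K, x ∈ AddSubgroup.closure
      ((s : Set K) ∪ (NonUnitalSubring.closure {b} : Set K) * (s : Set K))) :
    Module.Finite R K := by
  refine ⟨s, Submodule.eq_top_iff'.mpr fun x => ?_⟩
  suffices AddSubgroup.closure ((s : Set K) ∪ (NonUnitalSubring.closure {b} : Set K) * s) ≤
      (Submodule.span R (s : Set K)).toAddSubgroup from this (hs x)
  rw [AddSubgroup.closure_le]
  rintro y (hy | ⟨u, hu, c, hc, rfl⟩)
  · exact Submodule.subset_span hy
  · obtain ⟨q, hq⟩ := NonUnitalSubring.exists_mul_eq_smul_of_mem_closure_singleton hr hu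
    change u * c ∈ Submodule.span R (s : Set K)
    rw [hq]
    exact Submodule.smul_mem _ q (Submodule.subset_span hc)

theorem Polynomial.finite_quotient_span_singleton {F : Type} [Field F] [Finite F] {g : F[X]}
    (hg : g ≠ 0) : Finite (F[X] ⧸ Ideal.span {g}) :=
  have := Module.Finite.of_basis (AdjoinRoot.powerBasis hg).basis
  Module.finite_of_finite F (M := AdjoinRoot g)

theorem Polynomial.exists_linearMap_finite_apply_ne_zero {F M : Type} [Field F] [Finite F]
    [AddCommGroup M] [Module F[X] M] [Module.Finite F[X] M] {x : M} (hx : x ≠ 0) :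
    ∃ (T : Type) (_ : AddCommGroup T) (_ : Module F[X] T) (_ : Finite T) (f : M →ₗ[F[X]] T),
      f x ≠ 0 := by
  obtain ⟨n, ι, _, π, hπ, e, ⟨eqv⟩⟩ := Module.equiv_free_prod_directSum (R := F[X]) (M := M)
  have : ∀ i, Finite (F[X] ⧸ Ideal.span {π i ^ e i}) := fun i =>
    finite_quotient_span_singleton (pow_ne_zero _ (hπ i).ne_zero)
  by_cases htors : (eqv x).2 = 0
  · obtain ⟨j, hj⟩ : ∃ j, (eqv x).1 j ≠ 0 := by
      by_contra! hfree
      exact hx (eqv.map_eq_zero_iff.mp (Prod.ext (Finsupp.ext hfree) htors))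
    -- the `j`-th free coordinate survives modulo a power of `X` of larger degree
    let g : F[X] := X ^ ((eqv x).1 j).natDegree.succ
    have := finite_quotient_span_singleton (pow_ne_zero _ X_ne_zero : g ≠ 0)
    refine ⟨_, _, _, this,
      (Ideal.span {g}).mkQ ∘ₗ Finsupp.lapply j ∘ₗ LinearMap.fst _ _ _ ∘ₗ eqv.toLinearMap,
      fun h => ?_⟩
    simp only [LinearMap.comp_apply, LinearEquiv.coe_coe, LinearMap.fst_apply,
      Finsupp.lapply_apply, Submodule.mkQ_apply, Submodule.Quotient.mk_eq_zero,
      Ideal.mem_span_singleton] at h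
    have := natDegree_le_of_dvd h hj
    simp [g] at this
  · exact ⟨_, _, _, Finite.of_equiv _ DFinsupp.equivFunOnFintype.symm,
      LinearMap.snd _ _ _ ∘ₗ eqv.toLinearMap, htors⟩

section LeftIdeal

variable {K : Type} [NonUnitalRing K]

def AddSubgroup.quotientMulLeft (L : AddSubgroup K) (hL : ∀ y x, x ∈ L → y * x ∈ L) :
    K →ₙ+* Module.End ℤ (K ⧸ L) where
  toFun x := (QuotientAddGroup.map L L (AddMonoidHom.mulLeft x)
    (show L ≤ L.comap (AddMonoidHom.mulLeft x) from hL x)).toIntLinearMap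
  map_mul' x y := by
    ext z
    induction z using QuotientAddGroup.induction_on
    simp [mul_assoc]
  map_zero' := by
    ext z
    induction z using QuotientAddGroup.induction_on
    simp
  map_add' x y := by
    ext z
    induction z using QuotientAddGroup.induction_on
    simp [add_mul]

@[simp]
theorem AddSubgroup.quotientMulLeft_apply_mk (L : AddSubgroup K)
    (hL : ∀ y x, x ∈ L → y * x ∈ L) (x y : K) : L.quotientMulLeft hL x y = ↑(x * y) :=
  rfl

theorem exists_finite_nonUnitalRingHom_ker_le (L : AddSubgroup K) [L.FiniteIndex]
    (hL : ∀ y x, x ∈ L → y * x ∈ L) :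
    ∃ (F : Type) (_ : NonUnitalRing F) (_ : Finite F) (φ : K →ₙ+* F), ∀ x, φ x = 0 → x ∈ L := by
  let _ : Module (ZMod L.index) (K ⧸ L) := QuotientAddGroup.zmodModule L.nsmul_index_mem
  have : NeZero L.index := ⟨AddSubgroup.FiniteIndex.index_ne_zero⟩
  -- `x` acts by `(q, c) ↦ (x q + c x, 0)`, i.e. as left multiplication in the unitization
  -- `ZMod L.index ⋉ K` read modulo `L`; the vector `(0, 1)` then recovers `x` modulo `L`.
  let act (x : K) : Module.End ℤ ((K ⧸ L) × ZMod L.index) :=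
    LinearMap.inl ℤ _ _ ∘ₗ (L.quotientMulLeft hL x).coprod
      ((smulAddHom (ZMod L.index) (K ⧸ L)).flip (x : K ⧸ L)).toIntLinearMap
  let φ : K →ₙ+* Module.End ℤ ((K ⧸ L) × ZMod L.index) :=
    { toFun := act
      map_mul' x y := LinearMap.ext fun _ => by simp [act, ZMod.map_smul]
      map_zero' := LinearMap.ext fun _ => by simp [act]
      map_add' x y := LinearMap.ext fun _ => by simp [act]; abel }
  refine ⟨_, inferInstance, Finite.of_injective _ DFunLike.coe_injective, φ, fun x hx => ?_⟩
  change act x = 0 at hx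
  simpa [act] using congr(($hx (0, 1)).1)

end LeftIdeal

theorem exists_finite_nonUnitalRingHom_ker_le_ker {R K T : Type} [Semiring R] [NonUnitalRing K]
    [Module R K] [IsScalarTower R K K] [Module.Finite R K] [AddCommGroup T] [Module R T]
    [Finite T] (f : K →ₗ[R] T) :
    ∃ (F : Type) (_ : NonUnitalRing F) (_ : Finite F) (φ : K →ₙ+* F), ∀ x, φ x = 0 → f x = 0 := by
  obtain ⟨s, hs⟩ := Module.Finite.fg_top (R := R) (M := K)
  have mul_mem_ker {x : K} (hx : ∀ c ∈ s, f (c * x) = 0) (y : K) : f (y * x) = 0 := by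
    have : Submodule.span R (s : Set K) ≤ LinearMap.ker (f ∘ₗ LinearMap.mulRight R x) :=
      Submodule.span_le.mpr hx
    exact this (hs ▸ Submodule.mem_top)
  let g : K →+ T × (s → T) :=
    AddMonoidHom.mk' (fun x => (f x, fun c => f (c * x))) fun x y => by simp [mul_add]; rfl
  have mem_ker_g (x : K) : x ∈ g.ker ↔ f x = 0 ∧ ∀ c ∈ s, f (c * x) = 0 := by
    simp [g, Prod.ext_iff, funext_iff]
  obtain ⟨F, _, _, φ, hφ⟩ := exists_finite_nonUnitalRingHom_ker_le g.ker fun y x hx => by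
    rw [mem_ker_g] at hx ⊢
    exact ⟨mul_mem_ker hx.2 y, fun c _ => mul_assoc c y x ▸ mul_mem_ker hx.2 (c * y)⟩
  exact ⟨F, ‹_›, ‹_›, φ, fun x hx => ((mem_ker_g x).mp (hφ x hx)).1⟩

/-- A ring of prime characteristic `p` that is a finitely generated module over a
monogenic subring `ℤ⟨b⟩` is finitely separable from subrings containing `b`. -/
theorem stmt15 (K : Type) [NonUnitalRing K] (p : ℕ) (hp : p.Prime)
    (hchar : ∀ x : K, p • x = 0) (b : K)
    (hfg : ∃ s : Finset K, ∀ x : K,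
      x ∈ AddSubgroup.closure
        ((s : Set K) ∪ (NonUnitalSubring.closure {b} : Set K) * (s : Set K)))
    (a : K) (A : NonUnitalSubring K) (hbA : b ∈ A) (haA : a ∉ A) :
    ∃ (F : Type) (_ : NonUnitalRing F) (_ : Finite F),
      ∃ φ : K →ₙ+* F, φ a ∉ ⇑φ '' (A : Set K) := by
  have : Fact p.Prime := ⟨hp⟩
  let _ : Module (ZMod p) K := AddCommGroup.zmodModule hchar
  have : IsScalarTower (ZMod p) K K := ⟨fun c x y => ZMod.map_smul (AddMonoidHom.mulRight y) c x⟩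
  have : SMulCommClass (ZMod p) K K :=
    ⟨fun c x y => (ZMod.map_smul (AddMonoidHom.mulLeft x) c y).symm⟩
  obtain ⟨_, _, hX⟩ := exists_polynomial_module_X_smul_eq_mul (R := ZMod p) b
  obtain ⟨s, hs⟩ := hfg
  have : Module.Finite (ZMod p)[X] K := .of_forall_mem_closure_union_mul hX s hs
  let A' : Submodule (ZMod p)[X] K :=
    { A.toAddSubgroup with smul_mem' := fun q _ hx => A.smul_mem_of_X_smul_eq_mul hX hbA q hx }
  obtain ⟨T, _, _, _, f, hfa⟩ :=
    exists_linearMap_finite_apply_ne_zero (F := ZMod p) (x := A'.mkQ a) (by simpa [A'] using haA)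
  obtain ⟨F, _, _, φ, hφ⟩ := exists_finite_nonUnitalRingHom_ker_le_ker (f ∘ₗ A'.mkQ)
  refine ⟨F, ‹_›, ‹_›, φ, ?_⟩
  rintro ⟨α, hα, hφα⟩
  have hα' : (Submodule.Quotient.mk α : K ⧸ A') = 0 := (Submodule.Quotient.mk_eq_zero A').mpr hα
  exact hfa (by simpa [hα'] using hφ (α - a) (by rw [map_sub, hφα, sub_self]))
end

section
/- The polynomial ring $\mathbb{F}_p[x]$ in one variable over the prime field with $p$ elements is finitely separable: for every polynomial $f \in \mathbb{F}_p[x]$ and every subring $A \subseteq \mathbb{F}_p[x]$ with $f \notin A$, there exists a finite ring $F$ and a ring homomorphism $\varphi : \mathbb{F}_p[x] \to F$ such that $\varphi(f) \notin \varphi(A)$. -/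
/-! If some `g ≠ 0` divides no `a - b` with `b ∈ A`, reduction modulo `g` into the finite ring
`𝔽_p[x]/(g)` separates `a` from `A`. When `A` consists of constants, `g = x ^ (deg a + 1)` will
do. Otherwise `A` contains a nonconstant `c` and is then a module over `S = 𝔽_p[c]`, over which
`𝔽_p[x]` is finite since `x` is a root of `c(T) - c`. If no such `g` existed, the image of `a` in
the finitely generated `S`-module `𝔽_p[x]/A` would be divisible by every nonzero element of the
Noetherian domain `S`, and Krull's intersection theorem forces such an element to vanish. -/

open Polynomial

theorem eq_zero_of_forall_ne_zero_exists_eq_smul {R M : Type*} [CommRing R] [IsDomain R]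
    [IsNoetherianRing R] [AddCommGroup M] [Module R M] [Module.Finite R M] {c : R}
    (hc₀ : c ≠ 0) (hc : ¬IsUnit c) {x : M} (hx : ∀ g : R, g ≠ 0 → ∃ y : M, x = g • y) :
    x = 0 := by
  have mem_iInf : ∀ g : R, g ≠ 0 → x ∈ ⨅ i : ℕ, Ideal.span {g} ^ i • (⊤ : Submodule R M) :=
    fun g hg => Submodule.mem_iInf _ |>.2 fun i => by
      obtain ⟨y, rfl⟩ := hx (g ^ i) (pow_ne_zero i hg)
      exact Submodule.smul_mem_smul (Ideal.pow_mem_pow (Ideal.mem_span_singleton_self g) i)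
        Submodule.mem_top
  -- Krull's intersection theorem for `(c)` gives `e • x = 0` with `e ∈ 1 + (c)`, and then
  -- for `(e)` gives `x = s • e • x`.
  obtain ⟨⟨r, hr⟩, hrx⟩ := (Ideal.span {c}).mem_iInf_smul_pow_eq_bot_iff x |>.1 (mem_iInf c hc₀)
  have he : 1 - r ≠ 0 := fun h => hc <| by
    obtain ⟨s, hs⟩ := Ideal.mem_span_singleton.1 (sub_eq_zero.1 h ▸ hr)
    exact IsUnit.of_mul_eq_one s hs.symm
  obtain ⟨⟨r', hr'⟩, hr'x⟩ :=
    (Ideal.span {1 - r}).mem_iInf_smul_pow_eq_bot_iff x |>.1 (mem_iInf _ he)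
  obtain ⟨s, rfl⟩ := Ideal.mem_span_singleton.1 hr'
  calc x = ((1 - r) * s) • x := hr'x.symm
    _ = s • (x - r • x) := by rw [mul_comm, mul_smul, sub_smul, one_smul]
    _ = 0 := by rw [show r • x = x from hrx, sub_self, smul_zero]

theorem NonUnitalSubalgebra.mul_mem_of_mem_adjoin_singleton {k R : Type*} [CommSemiring k]
    [Semiring R] [Algebra k R] (A : NonUnitalSubalgebra k R) {c r b : R} (hc : c ∈ A)
    (hr : r ∈ Algebra.adjoin k {c}) (hb : b ∈ A) : r * b ∈ A := by
  induction hr using Algebra.adjoin_induction generalizing b with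
  | mem x hx => exact (Set.mem_singleton_iff.1 hx ▸ A.mul_mem hc hb)
  | algebraMap α => rw [← Algebra.smul_def]; exact A.smul_mem α hb
  | add x y _ _ hx hy => rw [add_mul]; exact A.add_mem (hx hb) (hy hb)
  | mul x y _ _ hx hy => rw [mul_assoc]; exact hx (hy hb)

theorem Polynomial.not_X_pow_dvd_sub {R : Type*} [CommRing R] [IsDomain R] {a b : R[X]}
    (hab : a ≠ b) (hb : b.natDegree = 0) : ¬X ^ (a.natDegree + 1) ∣ a - b := fun h => by
  have := natDegree_le_of_dvd h (sub_ne_zero.2 hab)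
  have := natDegree_sub_le a b
  rw [natDegree_X_pow] at *
  omega

section
variable {k : Type*} [Field k]

theorem Polynomial.isIntegral_X_of_natDegree_ne_zero_mem (S : Subalgebra k k[X]) {c : k[X]}
    (hc : c ∈ S) (hdeg : c.natDegree ≠ 0) : IsIntegral S (X : k[X]) := by
  have hc₀ : c ≠ 0 := by rintro rfl; exact hdeg natDegree_zero
  have hqS : c * C c.leadingCoeff⁻¹ ∈ S := S.mul_mem hc (S.algebraMap_mem _)
  refine IsIntegral.of_aeval_monic ((monic_mul_leadingCoeff_inv hc₀).map (algebraMap k S)) ?_ ?_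
  · rwa [natDegree_map, natDegree_mul_leadingCoeff_inv _ hc₀]
  · rw [aeval_map_algebraMap, aeval_X_left_apply]
    exact isIntegral_algebraMap (R := S) (x := (⟨_, hqS⟩ : S))

theorem Polynomial.finite_of_natDegree_ne_zero_mem (S : Subalgebra k k[X]) {c : k[X]}
    (hc : c ∈ S) (hdeg : c.natDegree ≠ 0) : Module.Finite S k[X] := by
  have htop : Algebra.adjoin S {(X : k[X])} = ⊤ := eq_top_iff.2 fun f _ => by
    rw [Algebra.adjoin_singleton_eq_range_aeval]
    exact ⟨f.map (algebraMap k S), (aeval_map_algebraMap S X f).trans (aeval_X_left_apply f)⟩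
  have := (isIntegral_X_of_natDegree_ne_zero_mem S hc hdeg).fg_adjoin_singleton
  rw [htop, Algebra.top_toSubmodule] at this
  exact ⟨this⟩

theorem NonUnitalSubalgebra.exists_not_dvd_sub_of_natDegree_ne_zero_mem
    (A : NonUnitalSubalgebra k k[X]) {a c : k[X]} (ha : a ∉ A) (hc : c ∈ A)
    (hdeg : c.natDegree ≠ 0) : ∃ g : k[X], g ≠ 0 ∧ ∀ b ∈ A, ¬g ∣ a - b := by
  by_contra! hdvd
  let S := Algebra.adjoin k {c}
  let A' : Submodule S k[X] :=
    { carrier := A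
      add_mem' := A.add_mem
      zero_mem' := A.zero_mem
      smul_mem' := fun r _ hb => A.mul_mem_of_mem_adjoin_singleton hc r.2 hb }
  have : Module.Finite S k[X] :=
    finite_of_natDegree_ne_zero_mem S (Algebra.self_mem_adjoin_singleton k c) hdeg
  have : Algebra.FiniteType k S := .adjoin_of_finite (Set.finite_singleton c)
  have : IsNoetherianRing S := Algebra.FiniteType.isNoetherianRing k S
  let c' : S := ⟨c, Algebra.self_mem_adjoin_singleton k c⟩
  have hc₀ : c' ≠ 0 := fun h =>
    hdeg (by rw [show c = 0 from congrArg Subtype.val h, natDegree_zero])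
  have hcu : ¬IsUnit c' := fun h => hdeg (natDegree_eq_zero_of_isUnit (h.map S.val))
  refine ha <| (Submodule.Quotient.mk_eq_zero A').1 <|
    eq_zero_of_forall_ne_zero_exists_eq_smul hc₀ hcu fun g hg => ?_
  obtain ⟨b, hb, h, hh⟩ := hdvd g (by simpa using hg)
  refine ⟨Submodule.Quotient.mk h, ?_⟩
  rw [← Submodule.Quotient.mk_smul, Submodule.Quotient.eq]
  change a - g * h ∈ A
  rwa [← hh, sub_sub_cancel]

theorem NonUnitalSubalgebra.exists_not_dvd_sub_of_notMem (A : NonUnitalSubalgebra k k[X])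
    {a : k[X]} (ha : a ∉ A) : ∃ g : k[X], g ≠ 0 ∧ ∀ b ∈ A, ¬g ∣ a - b := by
  by_cases hconst : ∀ b ∈ A, b.natDegree = 0
  · exact ⟨X ^ (a.natDegree + 1), pow_ne_zero _ X_ne_zero, fun b hb =>
      not_X_pow_dvd_sub (fun h => ha (h ▸ hb)) (hconst b hb)⟩
  · push Not at hconst
    obtain ⟨c, hc, hdeg⟩ := hconst
    exact A.exists_not_dvd_sub_of_natDegree_ne_zero_mem ha hc hdeg

end

def NonUnitalSubring.toZModNonUnitalSubalgebra (n : ℕ) {R : Type*} [NonUnitalRing R]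
    [Module (ZMod n) R] (A : NonUnitalSubring R) : NonUnitalSubalgebra (ZMod n) R :=
  { A with
    smul_mem' := fun α _ hx => (AddSubgroup.toZModSubmodule n A.toAddSubgroup).smul_mem α hx }

/-- The polynomial ring in one variable over the prime field with `p` elements is
finitely separable. -/
theorem stmt16 (p : ℕ) (hp : p.Prime) : IsFinSep (Polynomial (ZMod p)) := by
  have : Fact p.Prime := ⟨hp⟩
  intro a A ha
  obtain ⟨g, hg₀, hg⟩ := (A.toZModNonUnitalSubalgebra p).exists_not_dvd_sub_of_notMem ha
  have : Module.Finite (ZMod p) (AdjoinRoot g) := (AdjoinRoot.powerBasis hg₀).finite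
  refine ⟨AdjoinRoot g, inferInstance, Module.finite_of_finite (ZMod p),
    (AdjoinRoot.mk g).toNonUnitalRingHom, ?_⟩
  rintro ⟨b, hb, hba⟩
  exact hg b hb (dvd_sub_comm.1 (AdjoinRoot.mk_eq_mk.1 hba))
end

section
/- Let $a$ be an element of a ring $K$ satisfying $l_0 a^m + l_1 a^{m-1} + \cdots + l_{m-1} a = 0$ for some positive integer $m$ and integers $l_0 > 0, l_1, \dots, l_{m-1}$ with $\gcd(l_0, l_1, \dots, l_{m-1}) = 1$, and also satisfying $d \cdot f(a) = 0$ for some monic integer polynomial $f(x)$ without constant term and some integer $d > 1$. Then $\varphi(a) = 0$ for some monic integer polynomial $\varphi(x)$ of degree at most $m$ without constant term. -/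
/-!
Let `L` be the `ℤ`-span of `a, …, a ^ (m - 1)` and `P` that of all positive powers of `a`;
the claim is `a ^ m ∈ L`, i.e. `P = L`. The monic relation `d • f(a) = 0` together with the
leading coefficient `l₀` gives `(l₀ ^ (deg f - m) * d) • P ≤ L`, so `P / L` has bounded
exponent. For a prime `p`, the highest coefficient of the coprime relation not divisible by `p`
is invertible mod `p`, whence `P ≤ L + p • P`. Iterating over the prime factors of the
exponent gives `P ≤ L`.
-/

open Polynomial Submodule Pointwise

theorem Submodule.le_of_forall_prime_le_sup_smul {M : Type*} [AddCommGroup M]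
    {L P : Submodule ℤ M} (hprime : ∀ p : ℤ, Prime p → P ≤ L ⊔ p • P)
    {D : ℤ} (hD : D ≠ 0) (hDP : ∀ x ∈ P, D • x ∈ L) : P ≤ L := by
  have key : ∀ n : ℤ, n ≠ 0 → ∀ x ∈ P, ∃ y ∈ P, x - n • y ∈ L := by
    intro n
    induction n using UniqueFactorizationMonoid.induction_on_prime with
    | h₁ => exact fun h => (h rfl).elim
    | h₂ u hu =>
      refine fun _ x hx => ⟨u • x, P.smul_mem u hx, ?_⟩
      rw [smul_smul, Int.isUnit_mul_self hu, one_smul, sub_self]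
      exact L.zero_mem
    | h₃ n p hn hp ih =>
      intro _ x hx
      obtain ⟨y, hy, z, hz, rfl⟩ := mem_sup.1 (hprime p hp hx)
      obtain ⟨w, hw, rfl⟩ := (mem_smul_pointwise_iff_exists _ _ _).1 hz
      obtain ⟨v, hv, hwv⟩ := ih hn w hw
      refine ⟨v, hv, ?_⟩
      have : y + p • w - (p * n) • v = y + p • (w - n • v) := by
        rw [smul_sub, mul_smul]; abel
      rw [this]
      exact L.add_mem hy (L.smul_mem p hwv)
  intro x hx
  obtain ⟨y, hy, hxy⟩ := key D hD x hx
  simpa using L.add_mem hxy (hDP y hy)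

section PowSpan

variable {K : Type} [NonUnitalRing K] (a : K)

-- `powSpan a k` is the `ℤ`-span of `a, a ^ 2, …, a ^ k`, since `ppow a i = a ^ (i + 1)`.
def powSpan (k : ℕ) : Submodule ℤ K := span ℤ (ppow a '' Set.Iio k)

def powSpanAll : Submodule ℤ K := span ℤ (Set.range (ppow a))

variable {a}

theorem ppow_mem_powSpan {i k : ℕ} (h : i < k) : ppow a i ∈ powSpan a k :=
  subset_span ⟨i, h, rfl⟩

theorem ppow_mem_powSpanAll (i : ℕ) : ppow a i ∈ powSpanAll a :=
  subset_span ⟨i, rfl⟩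

theorem powSpan_mono : Monotone (powSpan a) :=
  fun _ _ h => span_mono (Set.image_mono (Set.Iio_subset_Iio h))

theorem mul_mem_powSpan_succ {k : ℕ} {x : K} (hx : x ∈ powSpan a k) :
    x * a ∈ powSpan a (k + 1) := by
  induction hx using span_induction with
  | mem _ h =>
    obtain ⟨i, hi, rfl⟩ := h
    exact ppow_mem_powSpan (i := i + 1) (Nat.succ_lt_succ hi)
  | zero => simp
  | add x y _ _ hx hy => simpa [add_mul] using add_mem hx hy
  | smul n x _ hx => simpa [smul_mul_assoc] using smul_mem _ n hx

theorem mul_mem_powSpanAll {x : K} (hx : x ∈ powSpanAll a) : x * a ∈ powSpanAll a := by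
  induction hx using span_induction with
  | mem _ h =>
    obtain ⟨i, rfl⟩ := h
    exact ppow_mem_powSpanAll (i + 1)
  | zero => simp
  | add x y _ _ hx hy => simpa [add_mul] using add_mem hx hy
  | smul n x _ hx => simpa [smul_mul_assoc] using smul_mem _ n hx

theorem sum_smul_ppow_mem_powSpan {k : ℕ} (c : ℕ → ℤ) :
    ∑ i ∈ Finset.range k, c i • ppow a i ∈ powSpan a k :=
  sum_mem fun _ hi => smul_mem _ _ (ppow_mem_powSpan (Finset.mem_range.1 hi))

theorem mem_powSpan_iff {k : ℕ} {x : K} :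
    x ∈ powSpan a k ↔ ∃ c : ℕ → ℤ, ∑ i ∈ Finset.range k, c i • ppow a i = x := by
  refine ⟨fun hx => ?_, fun ⟨c, hc⟩ => hc ▸ sum_smul_ppow_mem_powSpan c⟩
  induction hx using span_induction with
  | mem _ h =>
    obtain ⟨i, hi, rfl⟩ := h
    exact ⟨fun j => if j = i then 1 else 0, by simp [ite_smul, Set.mem_Iio.1 hi]⟩
  | zero => exact ⟨0, by simp⟩
  | add x y _ _ hx hy =>
    obtain ⟨c, rfl⟩ := hx
    obtain ⟨c', rfl⟩ := hy
    exact ⟨c + c', by simp [add_smul, Finset.sum_add_distrib]⟩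
  | smul n x _ hx =>
    obtain ⟨c, rfl⟩ := hx
    exact ⟨n • c, by simp [Finset.smul_sum, mul_smul]⟩

-- `hk` makes `powSpan a k ⊔ S` stable under right multiplication by `a`.
theorem powSpanAll_le_powSpan_sup {k : ℕ} {S : Submodule ℤ K} (hS : ∀ x ∈ S, x * a ∈ S)
    (hk : ppow a k ∈ powSpan a k ⊔ S) : powSpanAll a ≤ powSpan a k ⊔ S := by
  have hsucc : powSpan a (k + 1) ≤ powSpan a k ⊔ S := by
    refine span_le.2 ?_
    rintro _ ⟨i, hi, rfl⟩
    rcases Nat.lt_succ_iff_lt_or_eq.1 hi with hi | rfl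
    · exact mem_sup_left (ppow_mem_powSpan hi)
    · exact hk
  have hmul : ∀ x ∈ powSpan a k ⊔ S, x * a ∈ powSpan a k ⊔ S := by
    intro x hx
    obtain ⟨y, hy, z, hz, rfl⟩ := mem_sup.1 hx
    rw [add_mul]
    exact add_mem (hsucc (mul_mem_powSpan_succ hy)) (mem_sup_right (hS z hz))
  refine span_le.2 ?_
  rintro _ ⟨i, rfl⟩
  induction i with
  | zero => exact hsucc (ppow_mem_powSpan k.succ_pos)
  | succ i ih => exact hmul _ ih

theorem pow_smul_mem_powSpan {k : ℕ} {c : ℤ} (hc : c • ppow a k ∈ powSpan a k) (j : ℕ) :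
    ∀ x ∈ powSpan a (k + j), c ^ j • x ∈ powSpan a k := by
  have hshift : ∀ j, c • ppow a (k + j) ∈ powSpan a (k + j) := by
    intro j
    induction j with
    | zero => exact hc
    | succ j ih => simpa [ppow, smul_mul_assoc, ← add_assoc] using mul_mem_powSpan_succ ih
  induction j with
  | zero => simp
  | succ j ih =>
    intro x hx
    induction hx using span_induction with
    | mem _ h =>
      obtain ⟨i, hi, rfl⟩ := h
      rcases Nat.lt_succ_iff_lt_or_eq.1 hi with hi | rfl
      · rw [pow_succ', mul_smul]
        exact smul_mem _ c (ih _ (ppow_mem_powSpan hi))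
      · rw [pow_succ, mul_smul]
        exact ih _ (hshift j)
    | zero => simp
    | add x y _ _ hx hy => simpa [smul_add] using add_mem hx hy
    | smul n x _ hx => simpa [smul_comm _ n] using smul_mem _ n hx

theorem smul_mem_powSpan_of_smul_eq_zero {k : ℕ} {d : ℤ} {s : K} (hs : s ∈ powSpan a k)
    (h : d • (ppow a k + s) = 0) : ∀ x ∈ powSpanAll a, d • x ∈ powSpan a k := by
  let S := LinearMap.ker (d • LinearMap.id : K →ₗ[ℤ] K)
  have hS : ∀ x ∈ S, x * a ∈ S := fun x hx => by
    simp_all [S, ← smul_mul_assoc]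
  have hk : ppow a k ∈ powSpan a k ⊔ S := by
    rw [← add_sub_cancel_right (ppow a k) s]
    exact sub_mem (mem_sup_right (by simpa [S] using h)) (mem_sup_left hs)
  intro x hx
  obtain ⟨y, hy, z, hz, rfl⟩ := mem_sup.1 (powSpanAll_le_powSpan_sup hS hk hx)
  simpa [S, show d • z = 0 by simpa [S] using hz] using smul_mem _ d hy

theorem smul_last_mem_powSpan_of_sum_eq_zero {k : ℕ} {g : Fin (k + 1) → ℤ}
    (hrel : ∑ i, g i • ppow a i = 0) : g (Fin.last k) • ppow a k ∈ powSpan a k := by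
  rw [Fin.sum_univ_castSucc, Fin.val_last] at hrel
  rw [eq_neg_of_add_eq_zero_right hrel]
  exact neg_mem (sum_mem fun i _ => smul_mem _ _ (ppow_mem_powSpan i.2))

theorem powSpanAll_le_powSpan_sup_smul {k : ℕ} {g : Fin (k + 1) → ℤ}
    (hrel : ∑ i, g i • ppow a i = 0) {p : ℤ} (hp : Prime p) (hpg : ∃ i, ¬ p ∣ g i) :
    powSpanAll a ≤ powSpan a k ⊔ p • powSpanAll a := by
  classical
  set B := Finset.univ.filter fun i => ¬ p ∣ g i
  have hB : B.Nonempty := by simpa [B, Finset.filter_nonempty_iff] using hpg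
  -- all terms of the relation above `μ` lie in `p • powSpanAll a`
  set μ := B.max' hB
  have hμ : ¬ p ∣ g μ := (Finset.mem_filter.1 (B.max'_mem hB)).2
  have hhigh : ∀ i, μ < i → p ∣ g i := fun i hi => by
    by_contra h
    exact (B.le_max' i (Finset.mem_filter.2 ⟨Finset.mem_univ _, h⟩)).not_gt hi
  set S := p • powSpanAll a
  have hpS : ∀ x ∈ powSpanAll a, p • x ∈ S := fun x hx => smul_mem_pointwise_smul _ _ _ hx
  have hS : ∀ x ∈ S, x * a ∈ S := by
    intro x hx
    obtain ⟨y, hy, rfl⟩ := (mem_smul_pointwise_iff_exists _ _ _).1 hx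
    rw [smul_mul_assoc]
    exact hpS _ (mul_mem_powSpanAll hy)
  have hgμ : g μ • ppow a μ ∈ powSpan a μ ⊔ S := by
    rw [← Finset.add_sum_erase _ _ (Finset.mem_univ μ), add_eq_zero_iff_eq_neg] at hrel
    rw [hrel]
    refine neg_mem (sum_mem fun i hi => ?_)
    rcases lt_or_gt_of_ne (Finset.ne_of_mem_erase hi) with hlt | hgt
    · exact mem_sup_left (smul_mem _ _ (ppow_mem_powSpan hlt))
    · obtain ⟨e, he⟩ := hhigh i hgt
      rw [he, mul_smul]
      exact mem_sup_right (hpS _ (smul_mem _ _ (ppow_mem_powSpanAll i)))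
  have hμS : ppow a μ ∈ powSpan a μ ⊔ S := by
    obtain ⟨u, v, huv⟩ := hp.coprime_iff_not_dvd.2 hμ
    rw [← one_smul ℤ (ppow a μ), ← huv, add_smul, mul_comm u p, mul_smul, mul_smul]
    exact add_mem (mem_sup_right (hpS _ (smul_mem _ _ (ppow_mem_powSpanAll μ))))
      (smul_mem _ _ hgμ)
  exact (powSpanAll_le_powSpan_sup hS hμS).trans
    (sup_le_sup_right (powSpan_mono (Nat.lt_succ_iff.1 μ.2)) _)

theorem exists_monic_of_ppow_mem_powSpan {k : ℕ} (h : ppow a k ∈ powSpan a k) :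
    ∃ φ : ℤ[X], φ.Monic ∧ φ.coeff 0 = 0 ∧ φ.natDegree ≤ k + 1 ∧ evalnc φ a = 0 := by
  obtain ⟨c, hc⟩ := mem_powSpan_iff.1 h
  set q : ℤ[X] := ∑ i ∈ Finset.range k, C (c i) * X ^ (i + 1)
  have hq : q.natDegree ≤ k := natDegree_sum_le_of_forall_le _ _ fun i hi =>
    (natDegree_C_mul_X_pow_le _ _).trans (Finset.mem_range.1 hi)
  have hdeg : (X ^ (k + 1) - q).natDegree = k + 1 := by
    rw [natDegree_sub_eq_left_of_natDegree_lt (by rw [natDegree_X_pow]; omega), natDegree_X_pow]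
  refine ⟨X ^ (k + 1) - q, monic_X_pow_sub (degree_le_natDegree.trans_lt ?_), by simp [q],
    hdeg.le, ?_⟩
  · exact_mod_cast Nat.lt_succ_of_le hq
  rw [evalnc, hdeg, Finset.sum_range_succ]
  simp only [eq_intCast, coeff_sub, coeff_X_pow, Nat.add_right_cancel_iff, finsetSum_coeff,
    coeff_intCast_mul, Int.cast_eq, mul_ite, mul_one, mul_zero, Finset.sum_ite_eq,
    Finset.mem_range, ↓reduceIte, lt_self_iff_false, sub_zero, one_smul, q]
  rw [Finset.sum_congr rfl fun x hx => ?_, Finset.sum_neg_distrib, hc, neg_add_cancel]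
  have hxk := Finset.mem_range.1 hx
  simp [hxk, hxk.ne]

end PowSpan

/-- If `a` satisfies a relation with coprime coefficients of degree `m` and also
`d • f(a) = 0` for a monic polynomial `f` and `d > 1`, then `a` satisfies a monic
relation of degree at most `m`. -/
theorem stmt17 (K : Type) [NonUnitalRing K] (a : K) (m : ℕ) (hm : 0 < m)
    (l : Fin m → ℤ) (hl0 : 0 < l ⟨0, hm⟩)
    (hgcd : Finset.univ.gcd l = 1)
    (hrel : ∑ i : Fin m, l i • ppow a (m - 1 - (i : ℕ)) = 0)
    (f : Polynomial ℤ) (d : ℤ) (hd : 1 < d) (hfm : f.Monic) (hfc : f.coeff 0 = 0)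
    (hdf : d • evalnc f a = 0) :
    ∃ φ : Polynomial ℤ, φ.Monic ∧ φ.coeff 0 = 0 ∧ φ.natDegree ≤ m ∧ evalnc φ a = 0 := by
  obtain ⟨k, rfl⟩ : ∃ k, m = k + 1 := ⟨m - 1, by omega⟩
  set g : Fin (k + 1) → ℤ := fun i => l i.rev
  have hg : ∑ i, g i • ppow a i = 0 := by
    rw [← hrel]
    exact Fintype.sum_equiv Fin.revPerm _ _ fun i => by
      simp [g, Nat.sub_sub_self (Nat.lt_succ_iff.1 i.2)]
  have hprime : ∀ p : ℤ, Prime p → powSpanAll a ≤ powSpan a k ⊔ p • powSpanAll a := by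
    refine fun p hp => powSpanAll_le_powSpan_sup_smul hg hp ?_
    by_contra! h
    exact hp.not_dvd_one (hgcd ▸ Finset.dvd_gcd fun i _ => by simpa [g] using h i.rev)
  have hl : l ⟨0, hm⟩ • ppow a k ∈ powSpan a k := by
    simpa [g] using smul_last_mem_powSpan_of_sum_eq_zero hg
  obtain ⟨n, hn⟩ : ∃ n, f.natDegree = n + 1 :=
    ⟨f.natDegree - 1, by have := hfm.natDegree_pos.2 (by rintro rfl; simp at hfc); omega⟩
  have hdP : ∀ x ∈ powSpanAll a, d • x ∈ powSpan a n := by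
    refine smul_mem_powSpan_of_smul_eq_zero (sum_smul_ppow_mem_powSpan fun i => f.coeff (i + 1)) ?_
    rwa [evalnc, hn, Finset.sum_range_succ, ← hn, hfm.coeff_natDegree, one_smul, add_comm] at hdf
  have hP : powSpanAll a ≤ powSpan a k := by
    refine Submodule.le_of_forall_prime_le_sup_smul hprime (D := l ⟨0, hm⟩ ^ (n - k) * d)
      (mul_ne_zero (pow_ne_zero (n - k) hl0.ne') (by omega)) fun x hx => ?_
    rw [mul_smul]
    exact pow_smul_mem_powSpan hl (n - k) _
      (powSpan_mono (show n ≤ k + (n - k) by omega) (hdP x hx))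
  exact exists_monic_of_ppow_mem_powSpan (hP (ppow_mem_powSpanAll k))
end

section
/- Let $a$ be an element of a ring $K$ satisfying $z_0 a^m + z_1 a^{m-1} + \cdots + z_{m-1} a = 0$ for some positive integer $m$ and integers $z_0 > 0, z_1, \dots, z_{m-1}$ with $\gcd(z_0, z_1, \dots, z_{m-1}) = k$, and also $d \cdot f(a) = 0$ for some monic integer polynomial $f(x)$ without constant term and some integer $d > 1$. Then $k \cdot \varphi(a) = 0$ in $K$ for some monic integer polynomial $\varphi(x)$ of degree at most $m$ without constant term. -/
open Polynomial

namespace Polynomial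

theorem C_dvd_iff_zmod (n : ℕ) (P : ℤ[X]) :
    C (n : ℤ) ∣ P ↔ P.map (Int.castRingHom (ZMod n)) = 0 := by
  rw [C_dvd_iff_dvd_coeff, Polynomial.ext_iff]
  simp [ZMod.intCast_zmod_eq_zero_iff_dvd]

theorem IsPrimitive.map_zmod_ne_zero {P : ℤ[X]} (hP : P.IsPrimitive) {p : ℕ} (hp : p.Prime) :
    P.map (Int.castRingHom (ZMod p)) ≠ 0 := fun h ↦
  (Nat.prime_iff_prime_int.mp hp).not_isUnit (hP _ ((C_dvd_iff_zmod p P).mpr h))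

theorem exists_C_dvd_sub_and_leadingCoeff_ne_zero {p : ℕ} [Fact p.Prime] {R : ℤ[X]}
    (hR : R.map (Int.castRingHom (ZMod p)) ≠ 0) :
    ∃ P : ℤ[X], C (p : ℤ) ∣ P - R ∧ (P.leadingCoeff : ZMod p) ≠ 0 := by
  obtain ⟨P, hPR, hdeg⟩ :=
    exists_natDegree_eq_of_mem_lifts ((mem_lifts (f := Int.castRingHom (ZMod p)) _).mpr ⟨R, rfl⟩)
  refine ⟨P, (C_dvd_iff_zmod p _).mpr (by rw [Polynomial.map_sub, hPR, sub_self]), ?_⟩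
  have hlc := leadingCoeff_ne_zero.mpr hR
  rwa [Polynomial.leadingCoeff, ← hdeg, ← hPR, coeff_map] at hlc

end Polynomial

theorem Int.ideal_eq_top_of_forall_prime {J : Ideal ℤ}
    (h : ∀ p : ℕ, p.Prime → ∃ x ∈ J, (x : ZMod p) ≠ 0) : J = ⊤ := by
  obtain ⟨g, rfl⟩ : ∃ g : ℤ, J = Ideal.span {g} :=
    ⟨_, (Submodule.IsPrincipal.span_singleton_generator J).symm⟩
  rw [Ideal.span_singleton_eq_top, Int.isUnit_iff_natAbs_eq]
  by_contra hg
  obtain ⟨p, hp, hpg⟩ := Nat.exists_prime_and_dvd hg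
  obtain ⟨x, hx, hpx⟩ := h p hp
  rw [Ideal.mem_span_singleton] at hx
  exact hpx ((ZMod.intCast_zmod_eq_zero_iff_dvd x p).mpr ((Int.natCast_dvd.mpr hpg).trans hx))

namespace Ideal

theorem exists_monic_mem_of_forall_prime (I : Ideal ℤ[X])
    (h : ∀ p : ℕ, p.Prime → ∃ χ ∈ I, (χ.leadingCoeff : ZMod p) ≠ 0) : ∃ ψ ∈ I, ψ.Monic := by
  have : I.leadingCoeff = ⊤ := by
    refine Int.ideal_eq_top_of_forall_prime fun p hp ↦ ?_
    obtain ⟨χ, hχ, hχp⟩ := h p hp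
    exact ⟨_, (I.mem_leadingCoeff _).mpr ⟨χ, hχ, rfl⟩, hχp⟩
  exact (I.mem_leadingCoeff 1).mp (this ▸ Submodule.mem_top)

theorem exists_monic_mem_natDegree_le_of_forall_prime (I : Ideal ℤ[X]) (D : ℕ)
    (h : ∀ p : ℕ, p.Prime → ∃ χ ∈ I, χ.natDegree ≤ D ∧ (χ.coeff D : ZMod p) ≠ 0) :
    ∃ ψ ∈ I, ψ.Monic ∧ ψ.natDegree ≤ D := by
  have : I.leadingCoeffNth D = ⊤ := by
    refine Int.ideal_eq_top_of_forall_prime fun p hp ↦ ?_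
    obtain ⟨χ, hχ, hχD, hχp⟩ := h p hp
    have hD : χ.natDegree = D :=
      natDegree_eq_of_le_of_coeff_ne_zero hχD fun h0 ↦ hχp (by rw [h0, Int.cast_zero])
    refine ⟨_, (I.mem_leadingCoeffNth D _).mpr ⟨χ, hχ, degree_le_of_natDegree_le hχD, rfl⟩, ?_⟩
    rwa [Polynomial.leadingCoeff, hD]
  obtain ⟨ψ, hψ, hψD, hψ1⟩ := (I.mem_leadingCoeffNth D 1).mp (this ▸ Submodule.mem_top)
  exact ⟨ψ, hψ, hψ1, natDegree_le_iff_degree_le.mpr hψD⟩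

theorem exists_mem_leadingCoeff_ne_zero {p : ℕ} [Fact p.Prime] {I : Ideal ℤ[X]} {R f : ℤ[X]}
    {d : ℤ} (hR : R ∈ I) (hRp : R.map (Int.castRingHom (ZMod p)) ≠ 0) (hf : f.Monic) (hd : d ≠ 0)
    (hdf : C d * f ∈ I) :
    ∃ χ ∈ I, (χ.leadingCoeff : ZMod p) ≠ 0 := by
  obtain ⟨u, hdu, hpu⟩ := (Int.finiteMultiplicity_iff (a := p) (b := d)).mpr
    ⟨by simpa using (Fact.out : p.Prime).ne_one, hd⟩ |>.exists_eq_pow_mul_and_not_dvd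
  set s := multiplicity (p : ℤ) d
  obtain ⟨P, hPR, hP⟩ := exists_C_dvd_sub_and_leadingCoeff_ne_zero hRp
  set x := f * P
  set y := f * (P - R)
  obtain ⟨Q, hQ⟩ : C d ∣ C u * y ^ (s + 1) := by
    have hdp : C d * C (p : ℤ) = C u * C (p : ℤ) ^ (s + 1) := by
      rw [hdu, map_mul, map_pow]; ring
    exact (Dvd.intro _ hdp).trans
      (mul_dvd_mul_left _ (pow_dvd_pow_of_dvd (dvd_mul_of_dvd_right hPR f) _))
  refine ⟨C u * x ^ (s + 1) - C d * (Q %ₘ f), ?_, ?_⟩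
  · have hxy : x - y ∈ I := by
      simpa only [x, y, ← mul_sub, sub_sub_cancel] using I.mul_mem_left f hR
    have : C u * x ^ (s + 1) - C d * (Q %ₘ f) =
        C u * (x ^ (s + 1) - y ^ (s + 1)) + C d * f * (Q /ₘ f) := by
      rw [mul_sub, hQ]
      linear_combination -C d * modByMonic_add_div Q f
    rw [this]
    exact add_mem (I.mul_mem_left _ (I.mem_of_dvd (sub_dvd_pow_sub_pow x y _) hxy))
      (I.mul_mem_right _ hdf)
  · have hu : u ≠ 0 := by rintro rfl; simp at hpu
    have hx : C u * x ^ (s + 1) ≠ 0 := by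
      have : P ≠ 0 := by rintro rfl; simp at hP
      simp [x, hu, hf.ne_zero, this]
    have hdeg : (C d * (Q %ₘ f)).degree < (C u * x ^ (s + 1)).degree :=
      calc (C d * (Q %ₘ f)).degree = (Q %ₘ f).degree := degree_C_mul hd
        _ < f.degree := degree_modByMonic_lt Q hf
        _ ≤ _ := degree_le_of_dvd (dvd_mul_of_dvd_right ((dvd_mul_right f P).trans
            (dvd_pow_self x (Nat.succ_ne_zero s))) _) hx
    rw [leadingCoeff_sub_of_degree_lt hdeg]
    simp only [leadingCoeff_mul, leadingCoeff_C, leadingCoeff_pow, x, hf.leadingCoeff, one_mul,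
      Int.cast_mul, Int.cast_pow]
    exact mul_ne_zero (by rwa [Ne, ZMod.intCast_zmod_eq_zero_iff_dvd]) (pow_ne_zero _ hP)

theorem exists_monic_mem_natDegree_lt {I : Ideal ℤ[X]} {R ψ : ℤ[X]} (hR : R ∈ I)
    (hRprim : R.IsPrimitive) (hψ : ψ ∈ I) (hψm : ψ.Monic) (hRψ : R.natDegree < ψ.natDegree) :
    ∃ φ ∈ I, φ.Monic ∧ φ.natDegree < ψ.natDegree := by
  suffices ∃ φ ∈ I, φ.Monic ∧ φ.natDegree ≤ ψ.natDegree - 1 from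
    this.imp fun φ ⟨hφ, hφm, hφD⟩ ↦ ⟨hφ, hφm, by omega⟩
  refine I.exists_monic_mem_natDegree_le_of_forall_prime _ fun p hp ↦ ?_
  have : Fact p.Prime := ⟨hp⟩
  set π := Int.castRingHom (ZMod p)
  have hR0 : R.map π ≠ 0 := hRprim.map_zmod_ne_zero hp
  set δ := (R.map π).natDegree
  have hδ : δ ≤ R.natDegree := natDegree_map_le
  set A := ψ.natDegree - 1 - δ
  have hψ1 : ψ ≠ 1 := by rintro rfl; simp at hRψ
  have hχ : (X ^ A * R %ₘ ψ).map π = X ^ A * R.map π := by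
    rw [map_modByMonic π hψm, Polynomial.map_mul, Polynomial.map_pow, map_X,
      modByMonic_eq_self_iff (hψm.map π)]
    refine degree_lt_degree ?_
    rw [natDegree_mul (pow_ne_zero _ X_ne_zero) hR0, natDegree_X_pow, hψm.natDegree_map]
    omega
  refine ⟨X ^ A * R %ₘ ψ, ?_, ?_, ?_⟩
  · rw [modByMonic_eq_sub_mul_div _ ψ]
    exact sub_mem (I.mul_mem_left _ hR) (I.mul_mem_right _ hψ)
  · have := natDegree_modByMonic_lt (X ^ A * R) hψm hψ1
    omega
  · change π _ ≠ 0
    rw [← coeff_map, hχ, show ψ.natDegree - 1 = δ + A by omega, coeff_X_pow_mul]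
    exact leadingCoeff_ne_zero.mpr hR0

theorem exists_monic_mem_natDegree_le {I : Ideal ℤ[X]} {R f : ℤ[X]} {d : ℤ} (hR : R ∈ I)
    (hRprim : R.IsPrimitive) (hf : f.Monic) (hd : d ≠ 0) (hdf : C d * f ∈ I) :
    ∃ φ ∈ I, φ.Monic ∧ φ.natDegree ≤ R.natDegree := by
  obtain ⟨ψ, hψ, hψm⟩ := I.exists_monic_mem_of_forall_prime fun p hp ↦
    have : Fact p.Prime := ⟨hp⟩
    I.exists_mem_leadingCoeff_ne_zero hR (hRprim.map_zmod_ne_zero hp) hf hd hdf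
  induction hD : ψ.natDegree using Nat.strong_induction_on generalizing ψ with
  | _ D ih =>
    rcases le_or_gt D R.natDegree with hle | hlt
    · exact ⟨ψ, hψ, hψm, hD ▸ hle⟩
    · obtain ⟨φ, hφ, hφm, hφD⟩ := exists_monic_mem_natDegree_lt hR hRprim hψ hψm (hD ▸ hlt)
      exact ih _ (hD ▸ hφD) φ hφ hφm rfl

end Ideal

namespace Unitization

variable {K : Type} [NonUnitalRing K]

theorem inr_pow_succ (a : K) (i : ℕ) :
    (inr a : Unitization ℤ K) ^ (i + 1) = inr (ppow a i) := by
  induction i with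
  | zero => rw [zero_add, pow_one, ppow]
  | succ i ih => rw [pow_succ, ih, ← inr_mul, ppow]

theorem fst_aeval_inr (a : K) (P : ℤ[X]) :
    (aeval (inr a : Unitization ℤ K) P).fst = P.coeff 0 := by
  rw [← fstHom_apply ℤ, ← aeval_algHom_apply, fstHom_apply, fst_inr, coeff_zero_eq_aeval_zero]

theorem snd_aeval_inr (a : K) (P : ℤ[X]) :
    (aeval (inr a : Unitization ℤ K) P).snd = evalnc P a := by
  rw [aeval_eq_sum_range, ← sndHom_apply ℤ, map_sum, Finset.sum_range_succ', evalnc]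
  simp only [sndHom_apply, snd_smul, inr_pow_succ, snd_inr, pow_zero, snd_one, smul_zero, add_zero]

theorem smul_aeval_inr_eq_zero_iff (c : ℤ) (a : K) (P : ℤ[X]) :
    c • aeval (inr a : Unitization ℤ K) P = 0 ↔ c * P.coeff 0 = 0 ∧ c • evalnc P a = 0 := by
  rw [Unitization.ext_iff, fst_smul, snd_smul, fst_aeval_inr, snd_aeval_inr, fst_zero, snd_zero,
    smul_eq_mul]

end Unitization

section RelationPoly

variable {m : ℕ}

noncomputable def relationPoly (z : Fin m → ℤ) : ℤ[X] :=
  ∑ i : Fin m, monomial (m - (i : ℕ)) (z i)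

theorem coeff_relationPoly (z : Fin m → ℤ) (i : Fin m) :
    (relationPoly z).coeff (m - i) = z i := by
  rw [relationPoly, finsetSum_coeff, Finset.sum_eq_single i]
  · rw [coeff_monomial, if_pos rfl]
  · intro j _ hji
    rw [coeff_monomial, if_neg]
    exact fun h ↦ hji (Fin.ext (by omega))
  · simp

theorem natDegree_relationPoly_le (z : Fin m → ℤ) : (relationPoly z).natDegree ≤ m :=
  natDegree_sum_le_of_forall_le _ _ fun _ _ ↦ (natDegree_monomial_le _).trans (Nat.sub_le _ _)

theorem content_relationPoly (z : Fin m → ℤ) : (relationPoly z).content = Finset.univ.gcd z := by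
  refine dvd_antisymm_of_normalize_eq normalize_content Finset.normalize_gcd
    (Finset.dvd_gcd fun i _ ↦ coeff_relationPoly z i ▸ content_dvd_coeff _) ?_
  refine dvd_content_iff_C_dvd.mpr (Finset.dvd_sum fun i _ ↦ ?_)
  obtain ⟨w, hw⟩ := Finset.gcd_dvd (Finset.mem_univ i) (f := z)
  rw [hw, ← C_mul_monomial]
  exact dvd_mul_right _ _

open Unitization in
theorem aeval_inr_relationPoly {K : Type} [NonUnitalRing K] (z : Fin m → ℤ) (a : K) :
    aeval (inr a : Unitization ℤ K) (relationPoly z) = inr (∑ i, z i • ppow a (m - 1 - i)) := by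
  rw [relationPoly, map_sum]
  refine (Finset.sum_congr rfl fun i _ ↦ ?_).trans (map_sum (inrHom ℤ ℤ K) _ _).symm
  rw [aeval_monomial, show m - i = m - 1 - i + 1 by omega, inr_pow_succ, algebraMap_eq_inl,
    inl_mul_inr, inrHom_apply]

end RelationPoly

open Unitization in
/-- If `a` satisfies a relation of degree `m` whose coefficients have gcd `k` and also
`d • f(a) = 0` for a monic polynomial `f` and `d > 1`, then `k • φ(a) = 0` for some
monic polynomial `φ` of degree at most `m`. -/
theorem stmt18 (K : Type) [NonUnitalRing K] (a : K) (m : ℕ) (hm : 0 < m)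
    (z : Fin m → ℤ) (hz0 : 0 < z ⟨0, hm⟩) (k : ℤ)
    (hgcd : Finset.univ.gcd z = k)
    (hrel : ∑ i : Fin m, z i • ppow a (m - 1 - (i : ℕ)) = 0)
    (f : Polynomial ℤ) (d : ℤ) (hd : 1 < d) (hfm : f.Monic) (hfc : f.coeff 0 = 0)
    (hdf : d • evalnc f a = 0) :
    ∃ φ : Polynomial ℤ, φ.Monic ∧ φ.coeff 0 = 0 ∧ φ.natDegree ≤ m ∧
      k • evalnc φ a = 0 := by
  have hk : k ≠ 0 := by
    rintro rfl
    exact hz0.ne' (Finset.gcd_eq_zero_iff.mp hgcd _ (Finset.mem_univ _))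
  set R := (relationPoly z).primPart
  have hkR : C k * R = relationPoly z := by
    rw [← hgcd, ← content_relationPoly, ← eq_C_content_mul_primPart]
  obtain ⟨φ, hφ, hφm, hφR⟩ := Ideal.exists_monic_mem_natDegree_le
    (Ideal.subset_span (Set.mem_insert R {C d * f})) (isPrimitive_primPart _) hfm
    (by omega) (Ideal.subset_span (Set.mem_insert_of_mem R rfl))
  obtain ⟨A, B, rfl⟩ := Ideal.mem_span_pair.mp hφ
  set x : Unitization ℤ K := inr a
  have hxR : k • aeval x R = 0 := by
    rw [← map_zsmul, smul_eq_C_mul, hkR, aeval_inr_relationPoly, hrel, inr_zero]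
  have hxf : aeval x (C d * f) = 0 := by
    rw [← smul_eq_C_mul, map_zsmul, smul_aeval_inr_eq_zero_iff]
    exact ⟨by rw [hfc, mul_zero], hdf⟩
  have hxφ : k • aeval x (A * R + B * (C d * f)) = 0 := by
    rw [map_add, map_mul, map_mul, hxf, mul_zero, add_zero, ← mul_smul_comm, hxR, mul_zero]
  obtain ⟨hφ0, hφa⟩ := (smul_aeval_inr_eq_zero_iff k a _).mp hxφ
  refine ⟨_, hφm, (mul_eq_zero.mp hφ0).resolve_left hk, ?_, hφa⟩
  exact hφR.trans ((natDegree_primPart _).trans_le (natDegree_relationPoly_le z))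
end
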